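/- arXiv:1406.7403 — 8 statements merged into one kernel-verified Lean document; each statement's English description precedes it below -/
import Mathlib

section
/- Fix integers n ≥ 1 and g ≥ 1. Let R be a commutative ℚ-algebra containing elements a_i (1 ≤ i ≤ n) and b_{ij} = b_{ji} (1 ≤ i < j ≤ n) satisfying, for all pairwise distinct indices i, j, k: a_i² = 0, a_i·b_{ij} = 0, b_{ij}² = −2g·a_i·a_j, and b_{ij}·b_{ik} = a_i·b_{jk}. Then every finite product of the generators a_i and b_{jk} is a rational multiple of a standard monomial; that is, for every such product there exist q ∈ ℚ, a subset A ⊆ {1,…,n}, and a set B of pairwise disjoint two-element subsets of {1,…,n}∖A such that the product equals q · ∏_{i∈A} a_i · ∏_{{j,k}∈B} b_{jk}. -/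
/-- A *standard pair* `(A, B)`: `A` is a set of indices and `B` is a set of ordered pairs
`(j,k)` with `j < k`, representing pairwise disjoint two-element subsets of the complement
of `A`. -/
def IsStandardPair {n : ℕ} (A : Finset (Fin n)) (B : Finset (Fin n × Fin n)) : Prop :=
  (∀ p ∈ B, p.1 < p.2 ∧ p.1 ∉ A ∧ p.2 ∉ A) ∧
  ∀ p ∈ B, ∀ q ∈ B, p ≠ q →
    p.1 ≠ q.1 ∧ p.1 ≠ q.2 ∧ p.2 ≠ q.1 ∧ p.2 ≠ q.2

set_option maxHeartbeats 1000000 in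
/-- With the tautological relations on the `n`-fold fibered product of the
universal hyperelliptic curve of genus `g`, every finite product of the generators `aᵢ`,
`b_{jk}` is a rational multiple of a standard monomial. -/
theorem stmt_2 (n g : ℕ) (hn : 1 ≤ n) (hg : 1 ≤ g)
    (R : Type*) [CommRing R] [Algebra ℚ R]
    (a : Fin n → R) (b : Fin n → Fin n → R)
    (hsymm : ∀ i j, b i j = b j i)
    (ha2 : ∀ i, a i ^ 2 = 0)
    (hab : ∀ i j, i ≠ j → a i * b i j = 0)
    (hb2 : ∀ i j, i ≠ j → b i j ^ 2 = -(2 * (g : R)) * (a i * a j))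
    (hbb : ∀ i j k, i ≠ j → i ≠ k → j ≠ k → b i j * b i k = a i * b j k)
    (L : List R)
    (hL : ∀ x ∈ L, (∃ i, x = a i) ∨ ∃ j k, j ≠ k ∧ x = b j k) :
    ∃ (q : ℚ) (A : Finset (Fin n)) (B : Finset (Fin n × Fin n)),
      IsStandardPair A B ∧
      L.prod = q • ((∏ i ∈ A, a i) * ∏ p ∈ B, b p.1 p.2) := by
  classical
  have std_empty : IsStandardPair (∅ : Finset (Fin n)) (∅ : Finset (Fin n × Fin n)) :=
    ⟨by simp, by simp⟩
  -- if `u` contains `i` and `x` differs from both entries of `u`, then `x ≠ i`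
  have ne_of : ∀ (x : Fin n) (u : Fin n × Fin n), x ≠ u.1 → x ≠ u.2 →
      ∀ i, (u.1 = i ∨ u.2 = i) → x ≠ i := by
    intro x u h1 h2 i hi h
    rcases hi with e | e
    · exact h1 (h.trans e.symm)
    · exact h2 (h.trans e.symm)
  -- if `r` has entries `{m, l}` and `x` differs from `m` and `l`, then `x` differs from
  -- both entries of `r`
  have ne_pair : ∀ (x m l : Fin n) (r : Fin n × Fin n),
      ((r.1 = m ∧ r.2 = l) ∨ (r.1 = l ∧ r.2 = m)) → x ≠ m → x ≠ l →
      x ≠ r.1 ∧ x ≠ r.2 := by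
    intro x m l r hor h1 h2
    rcases hor with ⟨e1, e2⟩ | ⟨e1, e2⟩
    · exact ⟨fun h => h1 (h.trans e1), fun h => h2 (h.trans e2)⟩
    · exact ⟨fun h => h2 (h.trans e1), fun h => h1 (h.trans e2)⟩
  -- ordered pair constructor
  have insb : ∀ m l : Fin n, m ≠ l → ∃ r : Fin n × Fin n, r.1 < r.2 ∧
      ((r.1 = m ∧ r.2 = l) ∨ (r.1 = l ∧ r.2 = m)) ∧ b r.1 r.2 = b m l := by
    intro m l h
    rcases lt_or_gt_of_ne h with h' | h'
    · exact ⟨(m, l), h', Or.inl ⟨rfl, rfl⟩, rfl⟩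
    · exact ⟨(l, m), h', Or.inr ⟨rfl, rfl⟩, hsymm _ _⟩
  -- the key step: multiplying a standard monomial by a generator
  have key : ∀ x : R, ((∃ i, x = a i) ∨ ∃ j k, j ≠ k ∧ x = b j k) →
      ∀ (A : Finset (Fin n)) (B : Finset (Fin n × Fin n)), IsStandardPair A B →
      ∃ (q' : ℚ) (A' : Finset (Fin n)) (B' : Finset (Fin n × Fin n)),
        IsStandardPair A' B' ∧
        x * ((∏ i ∈ A, a i) * ∏ p ∈ B, b p.1 p.2)
          = q' • ((∏ i ∈ A', a i) * ∏ p ∈ B', b p.1 p.2) := by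
    intro x hx A B hstd
    have hzero : x * ((∏ i ∈ A, a i) * ∏ p ∈ B, b p.1 p.2) = 0 →
        ∃ (q' : ℚ) (A' : Finset (Fin n)) (B' : Finset (Fin n × Fin n)),
        IsStandardPair A' B' ∧
        x * ((∏ i ∈ A, a i) * ∏ p ∈ B, b p.1 p.2)
          = q' • ((∏ i ∈ A', a i) * ∏ p ∈ B', b p.1 p.2) := by
      intro h
      exact ⟨0, ∅, ∅, std_empty, by simp [h]⟩
    have shares : ∀ u ∈ B, ∀ v ∈ B,
        (u.1 = v.1 ∨ u.1 = v.2 ∨ u.2 = v.1 ∨ u.2 = v.2) → u = v := by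
      intro u hu v hv h
      by_contra hne
      obtain ⟨h1, h2, h3, h4⟩ := hstd.2 u hu v hv hne
      tauto
    have shares' : ∀ u ∈ B, ∀ v ∈ B, ∀ i : Fin n,
        (u.1 = i ∨ u.2 = i) → (v.1 = i ∨ v.2 = i) → u = v := by
      intro u hu v hv i h1 h2
      apply shares u hu v hv
      rcases h1 with h | h <;> rcases h2 with h' | h'
      · exact Or.inl (h.trans h'.symm)
      · exact Or.inr (Or.inl (h.trans h'.symm))
      · exact Or.inr (Or.inr (Or.inl (h.trans h'.symm)))
      · exact Or.inr (Or.inr (Or.inr (h.trans h'.symm)))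
    have extract : ∀ (i : Fin n) (u : Fin n × Fin n), u ∈ B → (u.1 = i ∨ u.2 = i) →
        ∃ m, m ≠ i ∧ m ∉ A ∧ b u.1 u.2 = b i m ∧
          ((u.1 = i ∧ u.2 = m) ∨ (u.1 = m ∧ u.2 = i)) := by
      intro i u hu hc
      obtain ⟨hlt, h1A, h2A⟩ := hstd.1 u hu
      rcases hc with h | h
      · exact ⟨u.2, by rw [← h]; exact hlt.ne', h2A, by rw [h], Or.inl ⟨h, rfl⟩⟩
      · refine ⟨u.1, by rw [← h]; exact hlt.ne, h1A, ?_, Or.inr ⟨rfl, h⟩⟩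
        rw [h]; exact hsymm _ _
    rcases hx with ⟨i, rfl⟩ | ⟨j, k, hjk, rfl⟩
    · -- x = a i
      by_cases hiA : i ∈ A
      · apply hzero
        rw [← Finset.mul_prod_erase A a hiA]
        have h := ha2 i
        linear_combination ((∏ t ∈ A.erase i, a t) * ∏ p ∈ B, b p.1 p.2) * h
      by_cases hocc : ∃ u ∈ B, u.1 = i ∨ u.2 = i
      · obtain ⟨u, hu, hui⟩ := hocc
        obtain ⟨m, hmi, hmA, hbu, hor⟩ := extract i u hu hui
        apply hzero
        rw [← Finset.mul_prod_erase B _ hu, hbu]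
        have h := hab i m (Ne.symm hmi)
        linear_combination ((∏ t ∈ A, a t) * ∏ p ∈ B.erase u, b p.1 p.2) * h
      · push_neg at hocc
        refine ⟨1, insert i A, B, ⟨?_, hstd.2⟩, ?_⟩
        · intro u hu
          obtain ⟨h1, h2, h3⟩ := hstd.1 u hu
          obtain ⟨h4, h5⟩ := hocc u hu
          exact ⟨h1, by simp [Finset.mem_insert, h2, h4], by simp [Finset.mem_insert, h3, h5]⟩
        · rw [one_smul, Finset.prod_insert hiA]; ring
    · -- x = b j k
      by_cases hjA : j ∈ A
      · apply hzero
        rw [← Finset.mul_prod_erase A a hjA]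
        have h := hab j k hjk
        linear_combination ((∏ t ∈ A.erase j, a t) * ∏ p ∈ B, b p.1 p.2) * h
      by_cases hkA : k ∈ A
      · apply hzero
        rw [← Finset.mul_prod_erase A a hkA]
        have h := hab k j hjk.symm
        have hs := hsymm j k
        linear_combination ((∏ t ∈ A.erase k, a t) * ∏ p ∈ B, b p.1 p.2) * h
          + (a k * (∏ t ∈ A.erase k, a t) * ∏ p ∈ B, b p.1 p.2) * hs
      by_cases hoccj : ∃ u ∈ B, u.1 = j ∨ u.2 = j
      · obtain ⟨u, hu, huj⟩ := hoccj
        obtain ⟨m, hmj, hmA, hbu, horu⟩ := extract j u hu huj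
        have hum : u.1 = m ∨ u.2 = m := by
          rcases horu with ⟨e1, e2⟩ | ⟨e1, e2⟩
          · exact Or.inr e2
          · exact Or.inl e1
        by_cases hocck : ∃ v ∈ B, v.1 = k ∨ v.2 = k
        · obtain ⟨v, hv, hvk⟩ := hocck
          obtain ⟨l, hlk, hlA, hbv, horv⟩ := extract k v hv hvk
          have hvl : v.1 = l ∨ v.2 = l := by
            rcases horv with ⟨e1, e2⟩ | ⟨e1, e2⟩
            · exact Or.inr e2
            · exact Or.inl e1
          by_cases huv : u = v
          · -- `u` contains both `j` and `k` : square of `b j k`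
            subst huv
            have hmk : m = k := by
              rcases horu with ⟨e1, e2⟩ | ⟨e1, e2⟩ <;>
                rcases horv with ⟨f1, f2⟩ | ⟨f1, f2⟩ <;>
                first
                  | exact e2.symm.trans f2
                  | exact e1.symm.trans f1
                  | exact absurd (e1.symm.trans f1) hjk
                  | exact absurd (e2.symm.trans f2) hjk
            rw [hmk] at hbu
            refine ⟨-(2 * (g : ℚ)), insert j (insert k A), B.erase u, ⟨?_, ?_⟩, ?_⟩
            · intro s hs
              have hsB := Finset.mem_of_mem_erase hs
              have hsu : s ≠ u := (Finset.mem_erase.mp hs).1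
              obtain ⟨h1, h2, h3⟩ := hstd.1 s hsB
              obtain ⟨d1, d2, d3, d4⟩ := hstd.2 s hsB u hu hsu
              refine ⟨h1, ?_, ?_⟩ <;> simp only [Finset.mem_insert, not_or]
              · exact ⟨ne_of s.1 u d1 d2 j huj, ne_of s.1 u d1 d2 k hvk, h2⟩
              · exact ⟨ne_of s.2 u d3 d4 j huj, ne_of s.2 u d3 d4 k hvk, h3⟩
            · intro s hs t ht hst
              exact hstd.2 s (Finset.mem_of_mem_erase hs) t (Finset.mem_of_mem_erase ht) hst
            · have hsm : ∀ z : R, (-(2 * (g : ℚ))) • z = -(2 * (g : R)) * z := by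
                intro z
                rw [show (-(2 * (g : ℚ))) = (((-(2 * (g : ℤ)) : ℤ) : ℚ)) by push_cast; ring,
                  Algebra.smul_def, map_intCast]
                push_cast
                ring
              rw [← Finset.mul_prod_erase B _ hu, hbu, hsm,
                Finset.prod_insert (by simp [hjk, hjA]), Finset.prod_insert hkA]
              have h := hb2 j k hjk
              linear_combination ((∏ t ∈ A, a t) * ∏ p ∈ B.erase u, b p.1 p.2) * h
          · -- `u` contains `j` (partner `m`), `v` contains `k` (partner `l`), `u ≠ v`
            have hvu : v ≠ u := Ne.symm huv
            have hmk : m ≠ k := by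
              intro h
              refine huv (shares' u hu v hv k ?_ hvk)
              rcases horu with ⟨e1, e2⟩ | ⟨e1, e2⟩
              · exact Or.inr (e2.trans h)
              · exact Or.inl (e1.trans h)
            have hlj : l ≠ j := by
              intro h
              refine huv (shares' u hu v hv j huj ?_)
              rcases horv with ⟨e1, e2⟩ | ⟨e1, e2⟩
              · exact Or.inr (e2.trans h)
              · exact Or.inl (e1.trans h)
            have hml : m ≠ l := by
              intro h
              refine huv (shares' u hu v hv m hum ?_)
              rcases horv with ⟨f1, f2⟩ | ⟨f1, f2⟩
              · exact Or.inr (f2.trans h.symm)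
              · exact Or.inl (f1.trans h.symm)
            obtain ⟨r, hrlt, hror, hbr⟩ := insb m l hml
            have hvB : v ∈ B.erase u := Finset.mem_erase.mpr ⟨hvu, hv⟩
            have hrnot : r ∉ (B.erase u).erase v := by
              intro hr
              have hrB := Finset.mem_of_mem_erase (Finset.mem_of_mem_erase hr)
              have hru : r ≠ u := (Finset.mem_erase.mp (Finset.mem_of_mem_erase hr)).1
              refine hru (shares' r hrB u hu m ?_ hum)
              rcases hror with ⟨e1, e2⟩ | ⟨e1, e2⟩
              · exact Or.inl e1
              · exact Or.inr e2
            refine ⟨1, insert j (insert k A), insert r ((B.erase u).erase v), ⟨?_, ?_⟩, ?_⟩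
            · intro s hs
              rcases Finset.mem_insert.mp hs with rfl | hs'
              · refine ⟨hrlt, ?_, ?_⟩ <;> simp only [Finset.mem_insert, not_or] <;>
                  rcases hror with ⟨e1, e2⟩ | ⟨e1, e2⟩
                · rw [e1]; exact ⟨hmj, hmk, hmA⟩
                · rw [e1]; exact ⟨hlj, hlk, hlA⟩
                · rw [e2]; exact ⟨hlj, hlk, hlA⟩
                · rw [e2]; exact ⟨hmj, hmk, hmA⟩
              · have hsB := Finset.mem_of_mem_erase (Finset.mem_of_mem_erase hs')
                have hsu : s ≠ u := (Finset.mem_erase.mp (Finset.mem_of_mem_erase hs')).1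
                have hsv : s ≠ v := (Finset.mem_erase.mp hs').1
                obtain ⟨h1, h2, h3⟩ := hstd.1 s hsB
                obtain ⟨du1, du2, du3, du4⟩ := hstd.2 s hsB u hu hsu
                obtain ⟨dv1, dv2, dv3, dv4⟩ := hstd.2 s hsB v hv hsv
                refine ⟨h1, ?_, ?_⟩ <;> simp only [Finset.mem_insert, not_or]
                · exact ⟨ne_of s.1 u du1 du2 j huj, ne_of s.1 v dv1 dv2 k hvk, h2⟩
                · exact ⟨ne_of s.2 u du3 du4 j huj, ne_of s.2 v dv3 dv4 k hvk, h3⟩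
            · intro s hs t ht hst
              rcases Finset.mem_insert.mp hs with rfl | hs' <;>
                rcases Finset.mem_insert.mp ht with rfl | ht'
              · exact absurd rfl hst
              · have htB := Finset.mem_of_mem_erase (Finset.mem_of_mem_erase ht')
                have htu : t ≠ u := (Finset.mem_erase.mp (Finset.mem_of_mem_erase ht')).1
                have htv : t ≠ v := (Finset.mem_erase.mp ht').1
                obtain ⟨du1, du2, du3, du4⟩ := hstd.2 t htB u hu htu
                obtain ⟨dv1, dv2, dv3, dv4⟩ := hstd.2 t htB v hv htv
                obtain ⟨p1, p2⟩ := ne_pair t.1 m l s hror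
                  (ne_of t.1 u du1 du2 m hum) (ne_of t.1 v dv1 dv2 l hvl)
                obtain ⟨p3, p4⟩ := ne_pair t.2 m l s hror
                  (ne_of t.2 u du3 du4 m hum) (ne_of t.2 v dv3 dv4 l hvl)
                exact ⟨p1.symm, p3.symm, p2.symm, p4.symm⟩
              · have hsB := Finset.mem_of_mem_erase (Finset.mem_of_mem_erase hs')
                have hsu : s ≠ u := (Finset.mem_erase.mp (Finset.mem_of_mem_erase hs')).1
                have hsv : s ≠ v := (Finset.mem_erase.mp hs').1
                obtain ⟨du1, du2, du3, du4⟩ := hstd.2 s hsB u hu hsu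
                obtain ⟨dv1, dv2, dv3, dv4⟩ := hstd.2 s hsB v hv hsv
                obtain ⟨p1, p2⟩ := ne_pair s.1 m l t hror
                  (ne_of s.1 u du1 du2 m hum) (ne_of s.1 v dv1 dv2 l hvl)
                obtain ⟨p3, p4⟩ := ne_pair s.2 m l t hror
                  (ne_of s.2 u du3 du4 m hum) (ne_of s.2 v dv3 dv4 l hvl)
                exact ⟨p1, p2, p3, p4⟩
              · exact hstd.2 s (Finset.mem_of_mem_erase (Finset.mem_of_mem_erase hs'))
                  t (Finset.mem_of_mem_erase (Finset.mem_of_mem_erase ht')) hst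
            · rw [one_smul, ← Finset.mul_prod_erase B _ hu,
                ← Finset.mul_prod_erase (B.erase u) _ hvB, hbu, hbv,
                Finset.prod_insert hrnot, hbr,
                Finset.prod_insert (by simp [hjk, hjA]), Finset.prod_insert hkA]
              have h1 := hbb j m k (Ne.symm hmj) hjk hmk
              have h2 := hbb k m l (Ne.symm hmk) (Ne.symm hlk) hml
              have hs := hsymm m k
              linear_combination
                (((∏ t ∈ A, a t) * ∏ p ∈ (B.erase u).erase v, b p.1 p.2) * b k l) * h1
                + (((∏ t ∈ A, a t) * ∏ p ∈ (B.erase u).erase v, b p.1 p.2) * a j) * h2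
                + (((∏ t ∈ A, a t) * ∏ p ∈ (B.erase u).erase v, b p.1 p.2) * (a j * b k l)) * hs
        · -- only `j` occurs in `B`
          push_neg at hocck
          have hmk : m ≠ k := by
            intro h
            rcases hum with e | e
            · exact (hocck u hu).1 (e.trans h)
            · exact (hocck u hu).2 (e.trans h)
          obtain ⟨r, hrlt, hror, hbr⟩ := insb m k hmk
          have hrnot : r ∉ B.erase u := by
            intro hr
            have hrB := Finset.mem_of_mem_erase hr
            rcases hror with ⟨e1, e2⟩ | ⟨e1, e2⟩
            · exact (hocck r hrB).2 e2
            · exact (hocck r hrB).1 e1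
          refine ⟨1, insert j A, insert r (B.erase u), ⟨?_, ?_⟩, ?_⟩
          · intro s hs
            rcases Finset.mem_insert.mp hs with rfl | hs'
            · refine ⟨hrlt, ?_, ?_⟩ <;> simp only [Finset.mem_insert, not_or] <;>
                rcases hror with ⟨e1, e2⟩ | ⟨e1, e2⟩
              · rw [e1]; exact ⟨hmj, hmA⟩
              · rw [e1]; exact ⟨Ne.symm hjk, hkA⟩
              · rw [e2]; exact ⟨Ne.symm hjk, hkA⟩
              · rw [e2]; exact ⟨hmj, hmA⟩
            · have hsB := Finset.mem_of_mem_erase hs'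
              have hsu : s ≠ u := (Finset.mem_erase.mp hs').1
              obtain ⟨h1, h2, h3⟩ := hstd.1 s hsB
              obtain ⟨du1, du2, du3, du4⟩ := hstd.2 s hsB u hu hsu
              refine ⟨h1, ?_, ?_⟩ <;> simp only [Finset.mem_insert, not_or]
              · exact ⟨ne_of s.1 u du1 du2 j huj, h2⟩
              · exact ⟨ne_of s.2 u du3 du4 j huj, h3⟩
          · intro s hs t ht hst
            rcases Finset.mem_insert.mp hs with rfl | hs' <;>
              rcases Finset.mem_insert.mp ht with rfl | ht'
            · exact absurd rfl hst
            · have htB := Finset.mem_of_mem_erase ht'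
              have htu : t ≠ u := (Finset.mem_erase.mp ht').1
              obtain ⟨du1, du2, du3, du4⟩ := hstd.2 t htB u hu htu
              obtain ⟨p1, p2⟩ := ne_pair t.1 m k s hror
                (ne_of t.1 u du1 du2 m hum) (hocck t htB).1
              obtain ⟨p3, p4⟩ := ne_pair t.2 m k s hror
                (ne_of t.2 u du3 du4 m hum) (hocck t htB).2
              exact ⟨p1.symm, p3.symm, p2.symm, p4.symm⟩
            · have hsB := Finset.mem_of_mem_erase hs'
              have hsu : s ≠ u := (Finset.mem_erase.mp hs').1
              obtain ⟨du1, du2, du3, du4⟩ := hstd.2 s hsB u hu hsu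
              obtain ⟨p1, p2⟩ := ne_pair s.1 m k t hror
                (ne_of s.1 u du1 du2 m hum) (hocck s hsB).1
              obtain ⟨p3, p4⟩ := ne_pair s.2 m k t hror
                (ne_of s.2 u du3 du4 m hum) (hocck s hsB).2
              exact ⟨p1, p2, p3, p4⟩
            · exact hstd.2 s (Finset.mem_of_mem_erase hs') t (Finset.mem_of_mem_erase ht') hst
          · rw [one_smul, ← Finset.mul_prod_erase B _ hu, hbu,
              Finset.prod_insert hrnot, hbr, Finset.prod_insert hjA]
            have h1 := hbb j m k (Ne.symm hmj) hjk hmk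
            linear_combination ((∏ t ∈ A, a t) * ∏ p ∈ B.erase u, b p.1 p.2) * h1
      · by_cases hocck : ∃ v ∈ B, v.1 = k ∨ v.2 = k
        · -- only `k` occurs in `B`
          push_neg at hoccj
          obtain ⟨v, hv, hvk⟩ := hocck
          obtain ⟨l, hlk, hlA, hbv, horv⟩ := extract k v hv hvk
          have hvl : v.1 = l ∨ v.2 = l := by
            rcases horv with ⟨e1, e2⟩ | ⟨e1, e2⟩
            · exact Or.inr e2
            · exact Or.inl e1
          have hlj : l ≠ j := by
            intro h
            rcases hvl with e | e
            · exact (hoccj v hv).1 (e.trans h)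
            · exact (hoccj v hv).2 (e.trans h)
          obtain ⟨r, hrlt, hror, hbr⟩ := insb l j hlj
          have hrnot : r ∉ B.erase v := by
            intro hr
            have hrB := Finset.mem_of_mem_erase hr
            rcases hror with ⟨e1, e2⟩ | ⟨e1, e2⟩
            · exact (hoccj r hrB).2 e2
            · exact (hoccj r hrB).1 e1
          refine ⟨1, insert k A, insert r (B.erase v), ⟨?_, ?_⟩, ?_⟩
          · intro s hs
            rcases Finset.mem_insert.mp hs with rfl | hs'
            · refine ⟨hrlt, ?_, ?_⟩ <;> simp only [Finset.mem_insert, not_or] <;>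
                rcases hror with ⟨e1, e2⟩ | ⟨e1, e2⟩
              · rw [e1]; exact ⟨hlk, hlA⟩
              · rw [e1]; exact ⟨hjk, hjA⟩
              · rw [e2]; exact ⟨hjk, hjA⟩
              · rw [e2]; exact ⟨hlk, hlA⟩
            · have hsB := Finset.mem_of_mem_erase hs'
              have hsv : s ≠ v := (Finset.mem_erase.mp hs').1
              obtain ⟨h1, h2, h3⟩ := hstd.1 s hsB
              obtain ⟨dv1, dv2, dv3, dv4⟩ := hstd.2 s hsB v hv hsv
              refine ⟨h1, ?_, ?_⟩ <;> simp only [Finset.mem_insert, not_or]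
              · exact ⟨ne_of s.1 v dv1 dv2 k hvk, h2⟩
              · exact ⟨ne_of s.2 v dv3 dv4 k hvk, h3⟩
          · intro s hs t ht hst
            rcases Finset.mem_insert.mp hs with rfl | hs' <;>
              rcases Finset.mem_insert.mp ht with rfl | ht'
            · exact absurd rfl hst
            · have htB := Finset.mem_of_mem_erase ht'
              have htv : t ≠ v := (Finset.mem_erase.mp ht').1
              obtain ⟨dv1, dv2, dv3, dv4⟩ := hstd.2 t htB v hv htv
              obtain ⟨p1, p2⟩ := ne_pair t.1 l j s hror
                (ne_of t.1 v dv1 dv2 l hvl) (hoccj t htB).1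
              obtain ⟨p3, p4⟩ := ne_pair t.2 l j s hror
                (ne_of t.2 v dv3 dv4 l hvl) (hoccj t htB).2
              exact ⟨p1.symm, p3.symm, p2.symm, p4.symm⟩
            · have hsB := Finset.mem_of_mem_erase hs'
              have hsv : s ≠ v := (Finset.mem_erase.mp hs').1
              obtain ⟨dv1, dv2, dv3, dv4⟩ := hstd.2 s hsB v hv hsv
              obtain ⟨p1, p2⟩ := ne_pair s.1 l j t hror
                (ne_of s.1 v dv1 dv2 l hvl) (hoccj s hsB).1
              obtain ⟨p3, p4⟩ := ne_pair s.2 l j t hror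
                (ne_of s.2 v dv3 dv4 l hvl) (hoccj s hsB).2
              exact ⟨p1, p2, p3, p4⟩
            · exact hstd.2 s (Finset.mem_of_mem_erase hs') t (Finset.mem_of_mem_erase ht') hst
          · rw [one_smul, ← Finset.mul_prod_erase B _ hv, hbv,
              Finset.prod_insert hrnot, hbr, Finset.prod_insert hkA]
            have h1 := hbb k l j (Ne.symm hlk) hjk.symm hlj
            have hs := hsymm j k
            linear_combination ((∏ t ∈ A, a t) * ∏ p ∈ B.erase v, b p.1 p.2) * h1
              + (((∏ t ∈ A, a t) * ∏ p ∈ B.erase v, b p.1 p.2) * b k l) * hs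
        · -- neither `j` nor `k` occurs
          push_neg at hoccj
          push_neg at hocck
          obtain ⟨r, hrlt, hror, hbr⟩ := insb j k hjk
          have hrnot : r ∉ B := by
            intro hr
            rcases hror with ⟨e1, e2⟩ | ⟨e1, e2⟩
            · exact (hoccj r hr).1 e1
            · exact (hoccj r hr).2 e2
          refine ⟨1, A, insert r B, ⟨?_, ?_⟩, ?_⟩
          · intro s hs
            rcases Finset.mem_insert.mp hs with rfl | hs'
            · refine ⟨hrlt, ?_, ?_⟩ <;> rcases hror with ⟨e1, e2⟩ | ⟨e1, e2⟩
              · rw [e1]; exact hjA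
              · rw [e1]; exact hkA
              · rw [e2]; exact hkA
              · rw [e2]; exact hjA
            · exact hstd.1 s hs'
          · intro s hs t ht hst
            rcases Finset.mem_insert.mp hs with rfl | hs' <;>
              rcases Finset.mem_insert.mp ht with rfl | ht'
            · exact absurd rfl hst
            · obtain ⟨p1, p2⟩ := ne_pair t.1 j k s hror (hoccj t ht').1 (hocck t ht').1
              obtain ⟨p3, p4⟩ := ne_pair t.2 j k s hror (hoccj t ht').2 (hocck t ht').2
              exact ⟨p1.symm, p3.symm, p2.symm, p4.symm⟩
            · obtain ⟨p1, p2⟩ := ne_pair s.1 j k t hror (hoccj s hs').1 (hocck s hs').1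
              obtain ⟨p3, p4⟩ := ne_pair s.2 j k t hror (hoccj s hs').2 (hocck s hs').2
              exact ⟨p1, p2, p3, p4⟩
            · exact hstd.2 s hs' t ht' hst
          · rw [one_smul, Finset.prod_insert hrnot, hbr]; ring
  -- main induction
  have main : ∀ M : List R, (∀ x ∈ M, (∃ i, x = a i) ∨ ∃ j k, j ≠ k ∧ x = b j k) →
      ∃ (q : ℚ) (A : Finset (Fin n)) (B : Finset (Fin n × Fin n)),
        IsStandardPair A B ∧
        M.prod = q • ((∏ i ∈ A, a i) * ∏ p ∈ B, b p.1 p.2) := by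
    intro M
    induction M with
    | nil => exact fun _ => ⟨1, ∅, ∅, std_empty, by simp⟩
    | cons x M ih =>
      intro hM
      obtain ⟨q, A, B, hs, hprod⟩ := ih (fun y hy => hM y (List.mem_cons_of_mem _ hy))
      obtain ⟨q', A', B', hs', heq⟩ := key x (hM x List.mem_cons_self) A B hs
      refine ⟨q * q', A', B', hs', ?_⟩
      rw [List.prod_cons, hprod, mul_smul_comm, heq, smul_smul]
  exact main L hL
end

section
/- Fix integers n ≥ 1 and g ≥ 1. Let R be a commutative ℚ-algebra containing elements a_i (1 ≤ i ≤ n) and b_{ij} = b_{ji} (1 ≤ i < j ≤ n) satisfying, for all pairwise distinct indices i, j, k: a_i² = 0, a_i·b_{ij} = 0, b_{ij}² = −2g·a_i·a_j, and b_{ij}·b_{ik} = a_i·b_{jk}. Let (A₁,B₁) and (A₂,B₂) be standard pairs of the same degree, i.e. |A₁|+|B₁| = |A₂|+|B₂|. If A₁ ≠ A₂ or ⋃B₁ ≠ ⋃B₂ (the sets of indices matched by B₁ and B₂ differ), then (∏_{i ∈ {1,…,n}∖(A₁∪⋃B₁)} a_i · ∏_{{j,k}∈B₁} b_{jk}) ·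 (∏_{i∈A₂} a_i · ∏_{{j,k}∈B₂} b_{jk}) = 0. -/
/-- The set of indices matched by `B`. -/
def suppB {n : ℕ} (B : Finset (Fin n × Fin n)) : Finset (Fin n) :=
  B.biUnion fun p => {p.1, p.2}

lemma mem_suppB {n : ℕ} {B : Finset (Fin n × Fin n)} {i : Fin n} :
    i ∈ suppB B ↔ ∃ p ∈ B, i = p.1 ∨ i = p.2 := by
  simp [suppB]

lemma suppB_card {n : ℕ} {B : Finset (Fin n × Fin n)}
    (h1 : ∀ p ∈ B, p.1 ≠ p.2)
    (h2 : ∀ p ∈ B, ∀ q ∈ B, p ≠ q →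
      p.1 ≠ q.1 ∧ p.1 ≠ q.2 ∧ p.2 ≠ q.1 ∧ p.2 ≠ q.2) :
    (suppB B).card = 2 * B.card := by
  unfold suppB
  rw [Finset.card_biUnion]
  · rw [Finset.sum_congr rfl (fun p hp => Finset.card_pair (h1 p hp)),
      Finset.sum_const, smul_eq_mul, mul_comm]
  · intro p hp q hq hpq
    obtain ⟨h11, h12, h21, h22⟩ := h2 p hp q hq hpq
    simp only [Finset.disjoint_left, Finset.mem_insert, Finset.mem_singleton]
    rintro x (rfl | rfl) (h | h) <;> simp_all

private lemma aux1 {R : Type*} [CommRing R] {x : R} (h : x * x = 0) (p q s t : R) :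
    ((x * p) * q) * ((x * s) * t) = 0 := by linear_combination (p * q * s * t) * h

private lemma aux2 {R : Type*} [CommRing R] {x y : R} (h : x * y = 0) (p q s t : R) :
    ((x * p) * q) * (s * (y * t)) = 0 := by linear_combination (p * q * s * t) * h

private lemma aux3 {R : Type*} [CommRing R] {x y : R} (h : x * y = 0) (p q s t : R) :
    (p * (y * q)) * ((x * s) * t) = 0 := by linear_combination (p * q * s * t) * h

/-- Orthogonality of the intersection pairing with respect to standard
monomials: if `(A₁,B₁)` and `(A₂,B₂)` are standard pairs of the same degree with
`A₁ ≠ A₂` or `⋃B₁ ≠ ⋃B₂`, then the product of the dual standard monomial of `(A₁,B₁)`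
with the standard monomial of `(A₂,B₂)` vanishes. -/
theorem stmt_3 (n g : ℕ) (hn : 1 ≤ n) (hg : 1 ≤ g)
    (R : Type*) [CommRing R] [Algebra ℚ R]
    (a : Fin n → R) (b : Fin n → Fin n → R)
    (hsymm : ∀ i j, b i j = b j i)
    (ha2 : ∀ i, a i ^ 2 = 0)
    (hab : ∀ i j, i ≠ j → a i * b i j = 0)
    (hb2 : ∀ i j, i ≠ j → b i j ^ 2 = -(2 * (g : R)) * (a i * a j))
    (hbb : ∀ i j k, i ≠ j → i ≠ k → j ≠ k → b i j * b i k = a i * b j k)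
    (A₁ A₂ : Finset (Fin n)) (B₁ B₂ : Finset (Fin n × Fin n))
    (h₁ : IsStandardPair A₁ B₁) (h₂ : IsStandardPair A₂ B₂)
    (hdeg : A₁.card + B₁.card = A₂.card + B₂.card)
    (hne : A₁ ≠ A₂ ∨ suppB B₁ ≠ suppB B₂) :
    ((∏ i ∈ Finset.univ \ (A₁ ∪ suppB B₁), a i) * ∏ p ∈ B₁, b p.1 p.2) *
      ((∏ i ∈ A₂, a i) * ∏ p ∈ B₂, b p.1 p.2) = 0 := by
  classical
  -- key zero fact: if `i` is an endpoint of `p` (with `p.1 ≠ p.2`), then `a i * b p.1 p.2 = 0`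
  have key : ∀ (i : Fin n) (p : Fin n × Fin n), p.1 ≠ p.2 → (i = p.1 ∨ i = p.2) →
      a i * b p.1 p.2 = 0 := by
    rintro i p hne12 (rfl | rfl)
    · exact hab _ _ hne12
    · rw [hsymm]; exact hab _ _ hne12.symm
  -- Case 1: `C₁` meets `A₂`.
  by_cases hCA : ∃ i ∈ Finset.univ \ (A₁ ∪ suppB B₁), i ∈ A₂
  · obtain ⟨i, hi1, hi2⟩ := hCA
    rw [← Finset.mul_prod_erase _ a hi1, ← Finset.mul_prod_erase _ a hi2]
    have h2 : a i * a i = 0 := by have := ha2 i; rwa [sq] at this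
    exact aux1 h2 _ _ _ _
  -- Case 2: `C₁` meets `suppB B₂`.
  by_cases hCS : ∃ i ∈ Finset.univ \ (A₁ ∪ suppB B₁), i ∈ suppB B₂
  · obtain ⟨i, hi1, hi2⟩ := hCS
    obtain ⟨p, hp, hip⟩ := mem_suppB.mp hi2
    rw [← Finset.mul_prod_erase _ a hi1,
      ← Finset.mul_prod_erase _ (fun p => b p.1 p.2) hp]
    exact aux2 (key i p (h₂.1 p hp).1.ne hip) _ _ _ _
  -- Case 3: `A₂` meets `suppB B₁`.
  by_cases hAS : ∃ i ∈ A₂, i ∈ suppB B₁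
  · obtain ⟨i, hi1, hi2⟩ := hAS
    obtain ⟨p, hp, hip⟩ := mem_suppB.mp hi2
    rw [← Finset.mul_prod_erase _ a hi1,
      ← Finset.mul_prod_erase _ (fun p => b p.1 p.2) hp]
    exact aux3 (key i p (h₁.1 p hp).1.ne hip) _ _ _ _
  -- Case 4: no collisions.  This contradicts `hne` by counting.
  exfalso
  push_neg at hCA hCS hAS
  set C := Finset.univ \ (A₁ ∪ suppB B₁) with hC
  set S₁ := suppB B₁ with hS₁
  set S₂ := suppB B₂ with hS₂
  have hcard₁ : S₁.card = 2 * B₁.card :=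
    suppB_card (fun p hp => (h₁.1 p hp).1.ne) h₁.2
  have hcard₂ : S₂.card = 2 * B₂.card :=
    suppB_card (fun p hp => (h₂.1 p hp).1.ne) h₂.2
  -- A₁ disjoint from S₁
  have hA₁S₁ : Disjoint A₁ S₁ := by
    rw [Finset.disjoint_left]
    intro i hiA hiS
    obtain ⟨p, hp, hip⟩ := mem_suppB.mp hiS
    obtain ⟨-, h1, h2⟩ := h₁.1 p hp
    rcases hip with rfl | rfl
    exacts [h1 hiA, h2 hiA]
  -- A₂ disjoint from S₂
  have hA₂S₂ : Disjoint A₂ S₂ := by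
    rw [Finset.disjoint_left]
    intro i hiA hiS
    obtain ⟨p, hp, hip⟩ := mem_suppB.mp hiS
    obtain ⟨-, h1, h2⟩ := h₂.1 p hp
    rcases hip with rfl | rfl
    exacts [h1 hiA, h2 hiA]
  have hCcard : C.card = n - (A₁.card + 2 * B₁.card) := by
    rw [hC, Finset.card_sdiff_of_subset (Finset.subset_univ _), Finset.card_univ, Fintype.card_fin,
      Finset.card_union_of_disjoint hA₁S₁, hcard₁]
  have hsub : A₁.card + 2 * B₁.card ≤ n := by
    have := Finset.card_le_univ (A₁ ∪ S₁)
    rwa [Finset.card_union_of_disjoint hA₁S₁, hcard₁, Fintype.card_fin] at this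
  -- the three index sets are pairwise disjoint
  have hd1 : Disjoint C A₂ := Finset.disjoint_left.mpr hCA
  have hd2 : Disjoint C (S₁ ∪ S₂) := by
    rw [Finset.disjoint_union_right]
    constructor
    · rw [Finset.disjoint_left]
      intro i hiC hiS
      exact (Finset.mem_sdiff.mp hiC).2 (Finset.mem_union_right _ hiS)
    · exact Finset.disjoint_left.mpr hCS
  have hd3 : Disjoint A₂ (S₁ ∪ S₂) := by
    rw [Finset.disjoint_union_right]
    exact ⟨Finset.disjoint_left.mpr hAS, hA₂S₂⟩
  have htotal : C.card + A₂.card + (S₁ ∪ S₂).card ≤ n := by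
    have h := Finset.card_le_univ (C ∪ A₂ ∪ (S₁ ∪ S₂))
    rw [Finset.card_union_of_disjoint, Finset.card_union_of_disjoint hd1,
      Fintype.card_fin] at h
    · exact h
    · rw [Finset.disjoint_union_left]; exact ⟨hd2, hd3⟩
  have hunioninter : (S₁ ∪ S₂).card + (S₁ ∩ S₂).card = 2 * B₁.card + 2 * B₂.card := by
    rw [Finset.card_union_add_card_inter, hcard₁, hcard₂]
  have hinterle : (S₁ ∩ S₂).card ≤ (S₁ ∪ S₂).card :=
    Finset.card_le_card (Finset.inter_subset_union)
  -- arithmetic: conclude equalities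
  have hueq : (S₁ ∪ S₂).card ≤ (S₁ ∩ S₂).card := by omega
  have hSeq : S₁ = S₂ := by
    have hiu : S₁ ∩ S₂ = S₁ ∪ S₂ :=
      Finset.eq_of_subset_of_card_le Finset.inter_subset_union hueq
    apply Finset.Subset.antisymm
    · intro i hi
      have : i ∈ S₁ ∩ S₂ := hiu ▸ Finset.mem_union_left _ hi
      exact (Finset.mem_inter.mp this).2
    · intro i hi
      have : i ∈ S₁ ∩ S₂ := hiu ▸ Finset.mem_union_right _ hi
      exact (Finset.mem_inter.mp this).1
  have hBcard : B₁.card = B₂.card := by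
    have : S₁.card = S₂.card := by rw [hSeq]
    omega
  have hAeq : A₁ = A₂ := by
    apply (Finset.eq_of_subset_of_card_le ?_ ?_).symm
    · intro i hi
      have hiC : i ∉ C := fun h => Finset.disjoint_left.mp hd1 h hi
      have : i ∈ A₁ ∪ S₁ := by
        by_contra h
        exact hiC (Finset.mem_sdiff.mpr ⟨Finset.mem_univ i, h⟩)
      rcases Finset.mem_union.mp this with h | h
      · exact h
      · exact absurd h (hAS i hi)
    · omega
  rcases hne with h | h
  · exact h hAeq
  · exact h hSeq
end

section
/- Fix integers m ≥ 1 and g ≥ 1. Let R be a commutative ℚ-algebra containing elements a_i (1 ≤ i ≤ 2m) and b_{ij} = b_{ji} (1 ≤ i < j ≤ 2m) satisfying, for all pairwise distinct indices i, j, k: a_i² = 0, a_i·b_{ij} = 0, b_{ij}² = −2g·a_i·a_j, and b_{ij}·b_{ik} = a_i·b_{jk}. Let M₁ and M₂ be perfect matchings of {1,…,2m} (partitions of {1,…,2m} into m two-element blocks). Then ∏_{{i,j}∈M₁} b_{ij} · ∏_{{i,j}∈M₂} b_{ij} = (−2g)^c · ∏_{i=1}^{2m} a_i, where c is the number of connected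 components of the simple graph on {1,…,2m} whose edge set is M₁ ∪ M₂. -/
/-- A *perfect matching* of `{0, …, N-1}`, encoded as a set of ordered pairs `(i,j)` with
`i < j`, pairwise disjoint, covering every index. -/
def IsPerfectMatching {N : ℕ} (M : Finset (Fin N × Fin N)) : Prop :=
  (∀ p ∈ M, p.1 < p.2) ∧
  (∀ p ∈ M, ∀ q ∈ M, p ≠ q → p.1 ≠ q.1 ∧ p.1 ≠ q.2 ∧ p.2 ≠ q.1 ∧ p.2 ≠ q.2) ∧
  ∀ i : Fin N, ∃ p ∈ M, i = p.1 ∨ i = p.2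

open Finset Function

section ProdB
variable {α : Type*} {R : Type*} [CommRing R]

def prodB (b : α → α → R) : List α → R
  | x :: y :: t => b x y * prodB b (y :: t)
  | _ => 1

@[simp] lemma prodB_nil (b : α → α → R) : prodB b [] = 1 := rfl
@[simp] lemma prodB_single (b : α → α → R) (x : α) : prodB b [x] = 1 := rfl
lemma prodB_cons₂ (b : α → α → R) (x y : α) (t : List α) :
    prodB b (x :: y :: t) = b x y * prodB b (y :: t) := rfl

lemma prodB_append (b : α → α → R) :
    ∀ (A : List α) (x : α) (rest : List α),
      prodB b (A ++ x :: rest) = prodB b (A ++ [x]) * prodB b (x :: rest)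
  | [], x, rest => by simp
  | [a], x, rest => by simp [prodB_cons₂, mul_assoc]
  | a :: a2 :: A, x, rest => by
    have ih := prodB_append b (a2 :: A) x rest
    simp only [List.cons_append, prodB_cons₂] at *
    rw [ih]; ring

variable (g : ℕ) (a : α → R) (b : α → α → R)
variable (hsymm : ∀ i j, b i j = b j i)
variable (hb2 : ∀ i j, i ≠ j → b i j ^ 2 = -(2 * (g : R)) * (a i * a j))
variable (hbb : ∀ i j k, i ≠ j → i ≠ k → j ≠ k → b i j * b i k = a i * b j k)

include hsymm hb2 hbb in
lemma prodB_cycle :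
    ∀ (t : List α) (x y : α), (x :: y :: t).Nodup →
      prodB b ((x :: y :: t) ++ [x]) = -(2 * (g : R)) * ((x :: y :: t).map a).prod
  | [], x, y, h => by
    have hxy : x ≠ y := by simp at h; tauto
    have : b x y * b y x = b x y ^ 2 := by rw [hsymm y x]; ring
    simp only [List.cons_append, List.nil_append, prodB_cons₂, prodB_single, mul_one, List.map_cons, List.map_nil, List.prod_cons, List.prod_nil]
    rw [this, hb2 x y hxy]
  | z :: t', x, y, h => by
    have hxy : x ≠ y := by simp at h; tauto
    have hyz : y ≠ z := by simp at h; tauto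
    have hxz : x ≠ z := by simp at h; tauto
    have h' : (x :: z :: t').Nodup := by
      simp only [List.nodup_cons] at h ⊢
      refine ⟨?_, ?_, ?_⟩ <;> tauto
    have ih := prodB_cycle t' x z h'
    have key : b x y * b y z = a y * b x z := by
      rw [hsymm x y]; exact hbb y x z (Ne.symm hxy) hyz hxz
    calc prodB b ((x :: y :: z :: t') ++ [x])
        = (b x y * b y z) * prodB b ((z :: t') ++ [x]) := by
          simp only [List.cons_append, prodB_cons₂]; ring
      _ = a y * (b x z * prodB b ((z :: t') ++ [x])) := by rw [key]; ring
      _ = a y * prodB b ((x :: z :: t') ++ [x]) := by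
          simp only [List.cons_append, prodB_cons₂]
      _ = a y * (-(2 * (g : R)) * ((x :: z :: t').map a).prod) := by rw [ih]
      _ = -(2 * (g : R)) * ((x :: y :: z :: t').map a).prod := by
          simp only [List.map_cons, List.prod_cons]; ring
end ProdB



lemma IsPerfectMatching.exists_partner {N : ℕ} {M : Finset (Fin N × Fin N)}
    (hM : IsPerfectMatching M) :
    ∃ f : Fin N → Fin N, (∀ i, f (f i) = i) ∧ (∀ i, f i ≠ i) ∧
      (∀ p : Fin N × Fin N, p ∈ M ↔ p.1 < p.2 ∧ p.2 = f p.1) := by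
  classical
  obtain ⟨hlt, hdisj, hcov⟩ := hM
  choose p hpM hpi using hcov
  have hup : ∀ q ∈ M, ∀ i : Fin N, (i = q.1 ∨ i = q.2) → q = p i := by
    intro q hq i hi
    by_contra hne
    obtain ⟨h1, h2, h3, h4⟩ := hdisj q hq (p i) (hpM i) hne
    rcases hi with hi | hi <;> subst hi <;> rcases hpi _ with hj | hj
    exacts [h1 hj, h2 hj, h3 hj, h4 hj]
  set f : Fin N → Fin N := fun i => if i = (p i).1 then (p i).2 else (p i).1 with hf
  have hfval1 : ∀ i : Fin N, i = (p i).1 → f i = (p i).2 := by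
    intro i h; simp only [hf]; rw [if_pos h]
  have hfval2 : ∀ i : Fin N, i ≠ (p i).1 → f i = (p i).1 := by
    intro i h; simp only [hf]; rw [if_neg h]
  have hfpair : ∀ q ∈ M, f q.1 = q.2 ∧ f q.2 = q.1 := by
    intro q hq
    have e1 : p q.1 = q := (hup q hq q.1 (Or.inl rfl)).symm
    have e2 : p q.2 = q := (hup q hq q.2 (Or.inr rfl)).symm
    have hne : q.2 ≠ q.1 := (hlt q hq).ne'
    constructor
    · rw [hfval1 q.1 (by rw [e1]), e1]
    · rw [hfval2 q.2 (by rw [e2]; exact hne), e2]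
  have hmem : ∀ p' : Fin N × Fin N, p' ∈ M ↔ p'.1 < p'.2 ∧ p'.2 = f p'.1 := by
    intro q
    constructor
    · intro hq; exact ⟨hlt q hq, (hfpair q hq).1.symm⟩
    · rintro ⟨hlt', heq⟩
      rcases hpi q.1 with hj | hj
      · have hfv : f q.1 = (p q.1).2 := hfval1 q.1 hj
        have hq : q = p q.1 := by
          have : q.2 = (p q.1).2 := by rw [heq, hfv]
          rw [Prod.ext_iff]; exact ⟨hj, this⟩
        rw [hq]; exact hpM q.1
      · have h1 : q.1 ≠ (p q.1).1 := by
          intro h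
          have h2 := (hlt _ (hpM q.1)).ne'
          rw [← h, ← hj] at h2; exact h2 rfl
        have hfv : f q.1 = (p q.1).1 := hfval2 q.1 h1
        have hcon : q.2 < q.1 := by
          rw [heq, hfv]
          have h3 := hlt _ (hpM q.1)
          rw [← hj] at h3; exact h3
        exact absurd hlt' (by omega)
  have hinv : ∀ i, f (f i) = i := by
    intro i
    have h1 := (hfpair (p i) (hpM i)).1
    have h2 := (hfpair (p i) (hpM i)).2
    rcases hpi i with hj | hj
    · have e : f i = (p i).2 := (congrArg f hj).trans h1
      rw [e, h2]; exact hj.symm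
    · have e : f i = (p i).1 := (congrArg f hj).trans h2
      rw [e, h1]; exact hj.symm
  have hne : ∀ i, f i ≠ i := by
    intro i
    have h1 := (hfpair (p i) (hpM i)).1
    have h2 := (hfpair (p i) (hpM i)).2
    rcases hpi i with hj | hj
    · have e : f i = (p i).2 := (congrArg f hj).trans h1
      exact fun hc => (hlt _ (hpM i)).ne' (e.symm.trans (hc.trans hj))
    · have e : f i = (p i).1 := (congrArg f hj).trans h2
      exact fun hc => (hlt _ (hpM i)).ne (e.symm.trans (hc.trans hj))
  exact ⟨f, hinv, hne, hmem⟩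

lemma prod_matching {N : ℕ} {R : Type*} [CommRing R] (b : Fin N → Fin N → R)
    {M : Finset (Fin N × Fin N)} {f : Fin N → Fin N}
    (hmem : ∀ p : Fin N × Fin N, p ∈ M ↔ p.1 < p.2 ∧ p.2 = f p.1) :
    ∏ p ∈ M, b p.1 p.2 = ∏ w ∈ univ.filter (fun w => w < f w), b w (f w) := by
  refine Finset.prod_bij (fun p _ => p.1) ?_ ?_ ?_ ?_
  · intro p hp
    obtain ⟨h1, h2⟩ := (hmem p).1 hp
    simp only [mem_filter, mem_univ, true_and]
    rw [← h2]; exact h1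
  · intro p hp q hq h
    obtain ⟨_, h2⟩ := (hmem p).1 hp
    obtain ⟨_, h4⟩ := (hmem q).1 hq
    rw [Prod.ext_iff]
    exact ⟨h, by rw [h2, h4, h]⟩
  · intro w hw
    simp only [mem_filter, mem_univ, true_and] at hw
    exact ⟨(w, f w), (hmem _).2 ⟨hw, rfl⟩, rfl⟩
  · intro p hp
    obtain ⟨_, h2⟩ := (hmem p).1 hp
    rw [h2]

lemma card_components {α : Type*} [Fintype α] [DecidableEq α] (G : SimpleGraph α)
    [DecidableRel G.Reachable] :
    Nat.card G.ConnectedComponent =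
      (univ.image (fun v => univ.filter (fun w => G.Reachable v w))).card := by
  classical
  set S := univ.image (fun v : α => univ.filter (fun w => G.Reachable v w)) with hS
  have hlift : ∀ (v w : α) (p : G.Walk v w), p.IsPath →
      (univ.filter (fun x => G.Reachable v x)) = (univ.filter (fun x => G.Reachable w x)) := by
    intro v w p _
    have hr : G.Reachable v w := ⟨p⟩
    ext x
    simp only [mem_filter, mem_univ, true_and]
    exact ⟨fun h => hr.symm.trans h, fun h => hr.trans h⟩
  set φ : G.ConnectedComponent → Finset α :=
    SimpleGraph.ConnectedComponent.lift (fun v => univ.filter (fun w => G.Reachable v w)) hlift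
    with hφ
  have hmem : ∀ c, φ c ∈ S := by
    refine SimpleGraph.ConnectedComponent.ind ?_
    intro v
    exact mem_image_of_mem _ (mem_univ v)
  have hinj : Function.Injective φ := by
    intro c d
    refine SimpleGraph.ConnectedComponent.ind₂ (fun v w h => ?_) c d
    have hv : v ∈ univ.filter (fun x => G.Reachable v x) := by
      simp [SimpleGraph.Reachable.refl]
    rw [show φ (G.connectedComponentMk v) = univ.filter (fun x => G.Reachable v x) from rfl,
      show φ (G.connectedComponentMk w) = univ.filter (fun x => G.Reachable w x) from rfl] at h
    rw [h] at hv
    simp only [mem_filter, mem_univ, true_and] at hv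
    exact SimpleGraph.ConnectedComponent.sound hv.symm
  have hsurj : ∀ s ∈ S, ∃ c, φ c = s := by
    intro s hs
    simp only [hS, mem_image, mem_univ, true_and] at hs
    obtain ⟨v, hv⟩ := hs
    exact ⟨G.connectedComponentMk v, hv⟩
  have : Function.Bijective (fun c => (⟨φ c, hmem c⟩ : {s // s ∈ S})) := by
    constructor
    · intro c d h
      apply hinj
      exact congrArg Subtype.val h
    · rintro ⟨s, hs⟩
      obtain ⟨c, hc⟩ := hsurj s hs
      exact ⟨c, Subtype.ext hc⟩
  rw [Nat.card_eq_of_bijective _ this]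
  simp [Nat.card_eq_fintype_card, Fintype.card_coe]

lemma orbit_block {α : Type*} [Fintype α] [LinearOrder α] {R : Type*} [CommRing R]
    (g : ℕ) (a : α → R) (b : α → α → R)
    (hsymm : ∀ i j, b i j = b j i)
    (hb2 : ∀ i j, i ≠ j → b i j ^ 2 = -(2 * (g : R)) * (a i * a j))
    (hbb : ∀ i j k, i ≠ j → i ≠ k → j ≠ k → b i j * b i k = a i * b j k)
    (f₁ f₂ : α → α)
    (h₁ : ∀ x, f₁ (f₁ x) = x) (h₂ : ∀ x, f₂ (f₂ x) = x)
    (hn₁ : ∀ x, f₁ x ≠ x) (hn₂ : ∀ x, f₂ x ≠ x)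
    (v : α) :
    ∃ s : Finset α,
      v ∈ s ∧
      (∀ w ∈ s, f₁ w ∈ s ∧ f₂ w ∈ s) ∧
      (∀ w ∈ s, Relation.ReflTransGen (fun p q => q = f₁ p ∨ q = f₂ p) v w) ∧
      ((∏ w ∈ s.filter (fun w => w < f₁ w), b w (f₁ w)) *
        (∏ w ∈ s.filter (fun w => w < f₂ w), b w (f₂ w)) = -(2 * (g : R)) * ∏ w ∈ s, a w) := by
  classical
  set σ : α → α := f₂ ∘ f₁ with hσ
  set τ : α → α := f₁ ∘ f₂ with hτ
  have hστ : ∀ z, τ (σ z) = z := by intro z; simp [hσ, hτ, h₂, h₁]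
  have hτσ : ∀ z, σ (τ z) = z := by intro z; simp [hσ, hτ, h₂, h₁]
  have hf₁inj : Function.Injective f₁ := Function.LeftInverse.injective h₁
  -- v is a periodic point of σ
  have hper : v ∈ Function.periodicPts σ := by
    let e : Equiv.Perm α := ⟨σ, τ, hστ, hτσ⟩
    have h1 : 0 < orderOf e := orderOf_pos e
    have h2 : σ^[orderOf e] v = v := by
      have h3 : σ^[orderOf e] = ⇑(e ^ orderOf e) := Equiv.Perm.iterate_eq_pow e _
      rw [h3, pow_orderOf_eq_one]
      rfl
    exact Function.mk_mem_periodicPts h1 h2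
  set k := Function.minimalPeriod σ v with hkdef
  have hk0 : 0 < k := Function.minimalPeriod_pos_of_mem_periodicPts hper
  have hkv : σ^[k] v = v := Function.iterate_minimalPeriod
  have hmul : ∀ u : ℕ, σ^[u * k] v = v := fun u =>
    (Function.isPeriodicPt_minimalPeriod σ v).const_mul u
  obtain ⟨k', hk'⟩ : ∃ k', k = k' + 1 := ⟨k - 1, by omega⟩
  -- commutation lemmas
  have hL2 : ∀ (i : ℕ) (z : α), f₁ (σ^[i] z) = τ^[i] (f₁ z) := by
    intro i
    induction i with
    | zero => intro z; simp
    | succ n ih =>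
      intro z
      rw [Function.iterate_succ_apply, ih (σ z), Function.iterate_succ_apply]
      rfl
  have hL3 : ∀ (s c : ℕ) (z : α), τ^[s] (σ^[s + c] z) = σ^[c] z := by
    intro s
    induction s with
    | zero => intro c z; simp
    | succ n ih =>
      intro c z
      have e1 : n + 1 + c = (n + c) + 1 := by omega
      rw [e1, Function.iterate_succ_apply' σ, Function.iterate_succ_apply τ, hστ, ih]
  have hRI : ∀ (n : ℕ) (z : α), σ^[n] (τ^[n] z) = z :=
    fun n z => Function.LeftInverse.iterate hτσ n z
  have hf2σ : ∀ z, f₂ z = σ (f₁ z) := by intro z; simp [hσ, h₁]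
  -- the key claim: f₁ v is not in the σ-orbit of v
  have hC0 : ∀ t : ℕ, σ^[t] v ≠ f₁ v := by
    intro t h
    have hL1 : ∀ s : ℕ, f₁ (σ^[s] v) = σ^[t + s * k'] v := by
      intro s
      rw [hL2 s v, ← h]
      have e1 : σ^[t] v = σ^[s + (t + s * k')] v := by
        have e2 : s + (t + s * k') = t + s * k := by rw [hk']; ring
        rw [e2, Function.iterate_add_apply, hmul]
      rw [e1, hL3 s (t + s * k') v]
    rcases Nat.even_or_odd t with ⟨u, hu⟩ | ⟨u, hu⟩
    · apply hn₁ (σ^[u] v)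
      rw [hL1 u]
      have e3 : t + u * k' = u + u * k := by rw [hk', hu]; ring
      rw [e3, Function.iterate_add_apply, hmul]
    · apply hn₂ (σ^[u+1] v)
      rw [hf2σ, hL1 (u+1)]
      have e4 : (t + (u+1) * k') + 1 = (u+1) + (u+1) * k := by rw [hk', hu]; ring
      have e5 : σ (σ^[t + (u+1) * k'] v) = σ^[(t + (u+1) * k') + 1] v :=
        (Function.iterate_succ_apply' σ _ v).symm
      rw [e5, e4, Function.iterate_add_apply, hmul]
  have hCC : ∀ (i t : ℕ), σ^[t] v ≠ f₁ (σ^[i] v) := by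
    intro i t h
    rw [hL2 i v] at h
    have h5 : σ^[i] (σ^[t] v) = f₁ v := by rw [h]; exact hRI i (f₁ v)
    rw [← Function.iterate_add_apply] at h5
    exact hC0 (i + t) h5
  -- vertex sequences
  set x : ℕ → α := fun i => σ^[i] v with hxdef
  set y : ℕ → α := fun i => f₁ (x i) with hydef
  have hxinj : ∀ i < k, ∀ j < k, x i = x j → i = j := by
    intro i hi j hj h
    exact Function.iterate_injOn_Iio_minimalPeriod (Set.mem_Iio.2 hi) (Set.mem_Iio.2 hj) h
  have hxy : ∀ i j, x i ≠ y j := fun i j => hCC j i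
  have hyinj : ∀ i < k, ∀ j < k, y i = y j → i = j := by
    intro i hi j hj h
    exact hxinj i hi j hj (hf₁inj h)
  have hxsucc : ∀ i, x (i + 1) = f₂ (y i) := by
    intro i
    simp only [hxdef, hydef, Function.iterate_succ_apply']
    rfl
  have hx0 : x 0 = v := rfl
  have hxk : x k = v := hkv
  -- the cycle list
  set cyc : ℕ → List α := fun j => (List.range j).flatMap (fun i => [x i, y i]) with hcyc
  have hcyc_succ : ∀ j, cyc (j + 1) = cyc j ++ [x j, y j] := by
    intro j
    simp [hcyc, List.range_succ]
  have hmemcyc : ∀ j w, w ∈ cyc j ↔ ∃ i < j, w = x i ∨ w = y i := by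
    intro j w
    simp only [hcyc, List.mem_flatMap, List.mem_range, List.mem_cons, List.mem_singleton,
      List.not_mem_nil, or_false]
  -- nodup
  have hnodup : ∀ j ≤ k, (cyc j).Nodup := by
    intro j
    induction j with
    | zero => intro _; simp [hcyc]
    | succ n ih =>
      intro hn1
      rw [hcyc_succ]
      refine List.Nodup.append (ih (by omega)) ?_ ?_
      · simp only [List.nodup_cons, List.mem_singleton, List.not_mem_nil, not_false_iff,
          List.nodup_nil, and_true]
        exact hxy n n
      · intro w hw hw2
        rw [hmemcyc] at hw
        obtain ⟨i, hi, hcase⟩ := hw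
        simp only [List.mem_cons, List.mem_singleton, List.not_mem_nil, or_false] at hw2
        rcases hcase with h | h <;> rcases hw2 with h' | h'
        · exact absurd (hxinj i (by omega) n (by omega) (h ▸ h')) (by omega)
        · exact hxy i n (h ▸ h')
        · exact (hxy n i (h'.symm.trans h)).elim
        · exact absurd (hyinj i (by omega) n (by omega) (h ▸ h')) (by omega)
  -- prodB evaluation along the cycle
  have hPB : ∀ (j : ℕ) (z : α), prodB b (cyc (j+1) ++ [z]) =
      (∏ i ∈ range j, (b (x i) (y i) * b (y i) (x (i+1)))) * (b (x j) (y j) * b (y j) z) := by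
    intro j
    induction j with
    | zero =>
      intro z
      have e0 : cyc 1 = [x 0, y 0] := by
        rw [show (1:ℕ) = 0 + 1 from rfl, hcyc_succ]
        simp [hcyc]
      rw [e0]
      show b (x 0) (y 0) * (b (y 0) z * 1) = _
      simp
    | succ n ih =>
      intro z
      have e1 : cyc (n+1+1) ++ [z] = cyc (n+1) ++ (x (n+1) :: [y (n+1), z]) := by
        rw [hcyc_succ (n+1)]; simp
      rw [e1, prodB_append, ih (x (n+1)), prod_range_succ]
      have e2 : prodB b (x (n+1) :: [y (n+1), z]) =
          b (x (n+1)) (y (n+1)) * (b (y (n+1)) z * 1) := rfl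
      rw [e2]; ring
  -- closed cycle product
  have hclose : prodB b (cyc k ++ [v]) =
      ∏ i ∈ range k, (b (x i) (y i) * b (y i) (f₂ (y i))) := by
    rw [hk', hPB k' v, prod_range_succ]
    have e3 : ∀ i ∈ range k', b (x i) (y i) * b (y i) (x (i+1)) =
        b (x i) (y i) * b (y i) (f₂ (y i)) := by
      intro i _; rw [hxsucc i]
    rw [Finset.prod_congr rfl e3]
    have e4 : v = f₂ (y k') := by rw [← hxsucc k', ← hk']; exact hxk.symm
    rw [← e4]
  -- head structure of the cycle
  have hhead : ∀ j, 1 ≤ j → ∃ tl, cyc j = x 0 :: y 0 :: tl := by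
    intro j
    induction j with
    | zero => omega
    | succ n ih =>
      intro _
      rcases Nat.eq_zero_or_pos n with rfl | hn
      · refine ⟨[], ?_⟩
        rw [show (0:ℕ)+1 = 0 + 1 from rfl, hcyc_succ]
        simp [hcyc]
      · obtain ⟨tl, htl⟩ := ih hn
        exact ⟨tl ++ [x n, y n], by rw [hcyc_succ, htl]; simp⟩
  obtain ⟨tl, htl⟩ := hhead k hk0
  have hval : prodB b (cyc k ++ [v]) = -(2 * (g : R)) * ((cyc k).map a).prod := by
    have h6 : (x 0 :: y 0 :: tl).Nodup := htl ▸ hnodup k le_rfl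
    have h7 := prodB_cycle g a b hsymm hb2 hbb tl (x 0) (y 0) h6
    rw [htl]
    exact h7
  -- the block
  set s : Finset α := (cyc k).toFinset with hs
  have hmem_s : ∀ w, w ∈ s ↔ ∃ i < k, w = x i ∨ w = y i := by
    intro w; rw [hs, List.mem_toFinset, hmemcyc]
  have hf₁x : ∀ i, f₁ (x i) = y i := fun i => rfl
  have hf₁y : ∀ i, f₁ (y i) = x i := fun i => h₁ (x i)
  have hf₂y : ∀ i, f₂ (y i) = x (i+1) := fun i => (hxsucc i).symm
  have hf₂x1 : ∀ i, f₂ (x (i+1)) = y i := by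
    intro i; rw [← hf₂y i, h₂]
  have hyltx : ∀ j, ¬ x j < y j → y j < x j :=
    fun j h => lt_of_le_of_ne (le_of_not_gt h) (fun hc => hxy j j hc.symm)
  have hxinj1 : ∀ i < k, ∀ j < k, x (i+1) = x (j+1) → i = j := by
    intro i hi j hj h
    have e : ∀ n, τ (x (n+1)) = x n := by
      intro n
      have : x (n+1) = σ (x n) := Function.iterate_succ_apply' σ n v
      rw [this, hστ]
    have := congrArg τ h
    rw [e i, e j] at this
    exact hxinj i hi j hj this
  have hxs1 : ∀ i < k, x (i+1) ∈ s := by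
    intro i hi
    rcases Nat.lt_or_ge (i+1) k with h | h
    · exact (hmem_s _).2 ⟨i+1, h, Or.inl rfl⟩
    · have : i + 1 = k := by omega
      rw [this, hxk, ← hx0]
      exact (hmem_s _).2 ⟨0, hk0, Or.inl rfl⟩
  -- first matching product over the block
  have hB1 : ∏ w ∈ s.filter (fun w => w < f₁ w), b w (f₁ w) =
      ∏ i ∈ range k, b (x i) (y i) := by
    symm
    refine Finset.prod_bij (fun j _ => if x j < y j then x j else y j) ?_ ?_ ?_ ?_
    · intro j hj
      rw [mem_range] at hj
      rw [mem_filter]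
      by_cases h : x j < y j
      · rw [if_pos h]
        exact ⟨(hmem_s _).2 ⟨j, hj, Or.inl rfl⟩, by rw [hf₁x]; exact h⟩
      · rw [if_neg h]
        exact ⟨(hmem_s _).2 ⟨j, hj, Or.inr rfl⟩, by rw [hf₁y]; exact hyltx j h⟩
    · intro j hj j' hj' hφ
      rw [mem_range] at hj hj'
      by_cases h : x j < y j <;> by_cases h' : x j' < y j'
      · rw [if_pos h, if_pos h'] at hφ
        exact hxinj j hj j' hj' hφ
      · rw [if_pos h, if_neg h'] at hφ
        exact absurd hφ (hxy j j')
      · rw [if_neg h, if_pos h'] at hφ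
        exact absurd hφ.symm (hxy j' j)
      · rw [if_neg h, if_neg h'] at hφ
        exact hyinj j hj j' hj' hφ
    · intro w hw
      rw [mem_filter] at hw
      obtain ⟨hws, hwlt⟩ := hw
      obtain ⟨i, hi, hc⟩ := (hmem_s w).1 hws
      rcases hc with rfl | rfl
      · rw [hf₁x] at hwlt
        exact ⟨i, mem_range.2 hi, by rw [if_pos hwlt]⟩
      · rw [hf₁y] at hwlt
        exact ⟨i, mem_range.2 hi, by rw [if_neg (fun hc => absurd (hwlt.trans hc) (lt_irrefl _))]⟩
    · intro j hj
      by_cases h : x j < y j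
      · rw [if_pos h, hf₁x]
      · rw [if_neg h, hf₁y, hsymm]
  -- second matching product over the block
  have hB2 : ∏ w ∈ s.filter (fun w => w < f₂ w), b w (f₂ w) =
      ∏ i ∈ range k, b (y i) (f₂ (y i)) := by
    symm
    refine Finset.prod_bij (fun j _ => if y j < f₂ (y j) then y j else f₂ (y j)) ?_ ?_ ?_ ?_
    · intro j hj
      rw [mem_range] at hj
      rw [mem_filter]
      by_cases h : y j < f₂ (y j)
      · rw [if_pos h]
        exact ⟨(hmem_s _).2 ⟨j, hj, Or.inr rfl⟩, h⟩
      · rw [if_neg h]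
        have hne : y j ≠ f₂ (y j) := fun hc => hn₂ (y j) (hc.symm)
        have hlt : f₂ (y j) < y j := lt_of_le_of_ne (le_of_not_gt h) (fun hc => hne hc.symm)
        refine ⟨by rw [hf₂y]; exact hxs1 j hj, ?_⟩
        rw [h₂]
        exact hlt
    · intro j hj j' hj' hφ
      rw [mem_range] at hj hj'
      by_cases h : y j < f₂ (y j) <;> by_cases h' : y j' < f₂ (y j')
      · rw [if_pos h, if_pos h'] at hφ
        exact hyinj j hj j' hj' hφ
      · rw [if_pos h, if_neg h'] at hφ
        rw [hf₂y] at hφ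
        exact absurd hφ.symm (hxy (j'+1) j)
      · rw [if_neg h, if_pos h'] at hφ
        rw [hf₂y] at hφ
        exact absurd hφ (hxy (j+1) j')
      · rw [if_neg h, if_neg h'] at hφ
        rw [hf₂y, hf₂y] at hφ
        exact hxinj1 j hj j' hj' hφ
    · intro w hw
      rw [mem_filter] at hw
      obtain ⟨hws, hwlt⟩ := hw
      obtain ⟨i, hi, hc⟩ := (hmem_s w).1 hws
      rcases hc with rfl | rfl
      · -- w = x i : take j = pred (or k')
        rcases Nat.eq_zero_or_pos i with rfl | hipos
        · refine ⟨k', mem_range.2 (by omega), ?_⟩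
          have ex : f₂ (y k') = x 0 := by rw [hf₂y, ← hk']; exact hxk
          have ew : f₂ (x 0) = y k' := by rw [← ex, h₂]
          rw [ew] at hwlt
          rw [if_neg (fun hc => lt_irrefl (x 0) (by rw [ex] at hc; exact hwlt.trans hc))]
          exact ex
        · obtain ⟨i', rfl⟩ : ∃ i', i = i'+1 := ⟨i-1, by omega⟩
          refine ⟨i', mem_range.2 (by omega), ?_⟩
          rw [hf₂x1] at hwlt
          rw [if_neg (fun hc => lt_irrefl _ (by rw [hf₂y] at hc; exact hwlt.trans hc))]
          exact hf₂y i' 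
      · exact ⟨i, mem_range.2 hi, by rw [if_pos hwlt]⟩
    · intro j hj
      by_cases h : y j < f₂ (y j)
      · rw [if_pos h]
      · rw [if_neg h, h₂, hsymm]
  have hcloseF : ∀ w ∈ s, f₁ w ∈ s ∧ f₂ w ∈ s := by
    intro w hw
    obtain ⟨i, hi, hc⟩ := (hmem_s w).1 hw
    rcases hc with rfl | rfl
    · refine ⟨(hmem_s _).2 ⟨i, hi, Or.inr rfl⟩, ?_⟩
      rcases Nat.eq_zero_or_pos i with rfl | hipos
      · have ex : f₂ (y k') = x 0 := by rw [hf₂y, ← hk']; exact hxk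
        have ew : f₂ (x 0) = y k' := by rw [← ex, h₂]
        rw [ew]
        exact (hmem_s _).2 ⟨k', by omega, Or.inr rfl⟩
      · obtain ⟨i', rfl⟩ : ∃ i', i = i'+1 := ⟨i-1, by omega⟩
        rw [hf₂x1]
        exact (hmem_s _).2 ⟨i', by omega, Or.inr rfl⟩
    · constructor
      · rw [hf₁y]
        exact (hmem_s _).2 ⟨i, hi, Or.inl rfl⟩
      · rw [hf₂y]
        exact hxs1 i hi
  have hreach : ∀ i, Relation.ReflTransGen (fun p q => q = f₁ p ∨ q = f₂ p) v (x i) ∧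
      Relation.ReflTransGen (fun p q => q = f₁ p ∨ q = f₂ p) v (y i) := by
    intro i
    induction i with
    | zero =>
      exact ⟨Relation.ReflTransGen.refl, Relation.ReflTransGen.single (Or.inl rfl)⟩
    | succ n ih =>
      have hx' : Relation.ReflTransGen (fun p q => q = f₁ p ∨ q = f₂ p) v (x (n+1)) :=
        ih.2.tail (Or.inr (hxsucc n))
      exact ⟨hx', hx'.tail (Or.inl rfl)⟩
  refine ⟨s, (hmem_s v).2 ⟨0, hk0, Or.inl rfl⟩, hcloseF, ?_, ?_⟩
  · intro w hw
    obtain ⟨i, hi, hc⟩ := (hmem_s w).1 hw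
    rcases hc with rfl | rfl
    exacts [(hreach i).1, (hreach i).2]
  · rw [hB1, hB2, ← Finset.prod_mul_distrib, ← hclose, hval]
    congr 1
    exact (List.prod_toFinset a (hnodup k le_rfl)).symm

/-- The entries of the Gram matrix of the intersection pairing on the span
of matching monomials: for perfect matchings `M₁, M₂` of `{1,…,2m}`,
`∏_{M₁} b · ∏_{M₂} b = (-2g)^c · ∏ᵢ aᵢ` where `c` is the number of connected components of
the graph on `{1,…,2m}` with edge set `M₁ ∪ M₂`. -/
theorem stmt_4 (m g : ℕ) (hm : 1 ≤ m) (hg : 1 ≤ g)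
    (R : Type*) [CommRing R] [Algebra ℚ R]
    (a : Fin (2 * m) → R) (b : Fin (2 * m) → Fin (2 * m) → R)
    (hsymm : ∀ i j, b i j = b j i)
    (ha2 : ∀ i, a i ^ 2 = 0)
    (hab : ∀ i j, i ≠ j → a i * b i j = 0)
    (hb2 : ∀ i j, i ≠ j → b i j ^ 2 = -(2 * (g : R)) * (a i * a j))
    (hbb : ∀ i j k, i ≠ j → i ≠ k → j ≠ k → b i j * b i k = a i * b j k)
    (M₁ M₂ : Finset (Fin (2 * m) × Fin (2 * m)))
    (hM₁ : IsPerfectMatching M₁) (hM₂ : IsPerfectMatching M₂) :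
    (∏ p ∈ M₁, b p.1 p.2) * (∏ p ∈ M₂, b p.1 p.2) =
      (-(2 * (g : R))) ^
          (Nat.card (SimpleGraph.fromRel
            (fun i j => (i, j) ∈ M₁ ∪ M₂ ∨ (j, i) ∈ M₁ ∪ M₂)).ConnectedComponent) *
        ∏ i, a i := by
  obtain ⟨f₁, h₁inv, h₁ne, h₁mem⟩ := hM₁.exists_partner
  obtain ⟨f₂, h₂inv, h₂ne, h₂mem⟩ := hM₂.exists_partner
  set G := SimpleGraph.fromRel
    (fun i j : Fin (2*m) => (i, j) ∈ M₁ ∪ M₂ ∨ (j, i) ∈ M₁ ∪ M₂) with hG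
  haveI : DecidableRel G.Reachable := Classical.decRel _
  have hM1f : ∀ p q : Fin (2*m), (p, q) ∈ M₁ → q = f₁ p ∧ p = f₁ q := by
    intro p q h
    have h2 := ((h₁mem (p, q)).1 h).2
    dsimp only at h2
    exact ⟨h2, by rw [h2, h₁inv]⟩
  have hM2f : ∀ p q : Fin (2*m), (p, q) ∈ M₂ → q = f₂ p ∧ p = f₂ q := by
    intro p q h
    have h2 := ((h₂mem (p, q)).1 h).2
    dsimp only at h2
    exact ⟨h2, by rw [h2, h₂inv]⟩
  have hAdj : ∀ w u : Fin (2*m), G.Adj w u ↔ u ≠ w ∧ (u = f₁ w ∨ u = f₂ w) := by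
    intro w u
    rw [hG, SimpleGraph.fromRel_adj]
    constructor
    · rintro ⟨hne, hr⟩
      refine ⟨hne.symm, ?_⟩
      have hcases : (w, u) ∈ M₁ ∪ M₂ ∨ (u, w) ∈ M₁ ∪ M₂ := by tauto
      rcases hcases with h | h <;> rw [Finset.mem_union] at h <;> rcases h with h | h
      · exact Or.inl (hM1f w u h).1
      · exact Or.inr (hM2f w u h).1
      · exact Or.inl (hM1f u w h).2
      · exact Or.inr (hM2f u w h).2
    · rintro ⟨hne, hor⟩
      refine ⟨hne.symm, ?_⟩
      rcases hor with hu | hu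
      · rcases lt_trichotomy w u with hlt | heq | hlt
        · exact Or.inl (Or.inl (Finset.mem_union_left _ ((h₁mem (w, u)).2 ⟨hlt, hu⟩)))
        · exact absurd heq.symm hne
        · refine Or.inl (Or.inr (Finset.mem_union_left _ ((h₁mem (u, w)).2 ⟨hlt, ?_⟩)))
          rw [hu, h₁inv]
      · rcases lt_trichotomy w u with hlt | heq | hlt
        · exact Or.inl (Or.inl (Finset.mem_union_right _ ((h₂mem (w, u)).2 ⟨hlt, hu⟩)))
        · exact absurd heq.symm hne
        · refine Or.inl (Or.inr (Finset.mem_union_right _ ((h₂mem (u, w)).2 ⟨hlt, ?_⟩)))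
          rw [hu, h₂inv]
  -- key: each reachability class is an orbit block with known product
  have hkey : ∀ v : Fin (2*m), ∃ s : Finset (Fin (2*m)),
      univ.filter (fun w => G.Reachable v w) = s ∧
      ((∏ w ∈ s.filter (fun w => w < f₁ w), b w (f₁ w)) *
        (∏ w ∈ s.filter (fun w => w < f₂ w), b w (f₂ w)) = -(2 * (g : R)) * ∏ w ∈ s, a w) := by
    intro v
    obtain ⟨s, hvs, hclose, hreach, hprod⟩ :=
      orbit_block g a b hsymm hb2 hbb f₁ f₂ h₁inv h₂inv h₁ne h₂ne v
    refine ⟨s, ?_, hprod⟩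
    ext w
    simp only [mem_filter, mem_univ, true_and]
    constructor
    · intro hr
      have hrtg : Relation.ReflTransGen G.Adj v w :=
        (SimpleGraph.reachable_iff_reflTransGen v w).1 hr
      clear hr
      induction hrtg with
      | refl => exact hvs
      | tail hab2 hbc ih =>
        rcases ((hAdj _ _).1 hbc).2 with h | h
        · rw [h]; exact (hclose _ ih).1
        · rw [h]; exact (hclose _ ih).2
    · intro hw
      refine (SimpleGraph.reachable_iff_reflTransGen v w).2 ?_
      refine Relation.ReflTransGen.mono ?_ _ _ (hreach w hw)
      intro p q hpq
      refine (hAdj p q).2 ⟨?_, hpq⟩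
      rcases hpq with h | h
      · rw [h]; exact h₁ne p
      · rw [h]; exact h₂ne p
  choose sOf hfilter hprodOf using hkey
  set S : Finset (Finset (Fin (2*m))) :=
    univ.image (fun v => univ.filter (fun w => G.Reachable v w)) with hS
  have hScard : Nat.card G.ConnectedComponent = S.card := card_components G
  have hSimg : S = univ.image sOf := by
    rw [hS]
    exact Finset.image_congr (fun v _ => hfilter v)
  have hself : ∀ v, v ∈ sOf v := by
    intro v
    rw [← hfilter v]
    simp [SimpleGraph.Reachable.refl]
  have hmemOf : ∀ v w, w ∈ sOf v ↔ G.Reachable v w := by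
    intro v w
    rw [← hfilter v]
    simp
  have hglue : ∀ v u w, w ∈ sOf v → w ∈ sOf u → sOf v = sOf u := by
    intro v u w hv hu
    rw [hmemOf] at hv hu
    rw [← hfilter v, ← hfilter u]
    ext z
    simp only [mem_filter, mem_univ, true_and]
    exact ⟨fun h => hu.trans (hv.symm.trans h), fun h => hv.trans (hu.symm.trans h)⟩
  have hdisjS : ∀ s ∈ S, ∀ t ∈ S, s ≠ t → Disjoint s t := by
    intro s hs t ht hst
    rw [hSimg, Finset.mem_image] at hs ht
    obtain ⟨v, _, rfl⟩ := hs
    obtain ⟨u, _, rfl⟩ := ht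
    rw [Finset.disjoint_left]
    intro w hw hw'
    exact hst (hglue v u w hw hw')
  have hbiU : ∀ t : Finset (Fin (2*m)), S.biUnion (fun s => s ∩ t) = t := by
    intro t
    ext w
    simp only [Finset.mem_biUnion, Finset.mem_inter]
    constructor
    · rintro ⟨s, _, _, hw⟩; exact hw
    · intro hw
      exact ⟨sOf w, by rw [hSimg]; exact Finset.mem_image_of_mem _ (mem_univ w),
        hself w, hw⟩
  have hPD : ∀ t : Finset (Fin (2*m)),
      Set.PairwiseDisjoint (↑S : Set (Finset (Fin (2*m)))) (fun s => s ∩ t) := by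
    intro t s hs u hu hsu
    exact Finset.disjoint_left.2 (fun w hw hw' =>
      (Finset.disjoint_left.1 (hdisjS s hs u hu hsu))
        (Finset.mem_inter.1 hw).1 (Finset.mem_inter.1 hw').1)
  have hsplit : ∀ (t : Finset (Fin (2*m))) (F : Fin (2*m) → R),
      ∏ w ∈ t, F w = ∏ s ∈ S, ∏ w ∈ s ∩ t, F w := by
    intro t F
    rw [← hbiU t, Finset.prod_biUnion (hPD t)]
    congr 1
    rw [hbiU t]
  have hint : ∀ (s : Finset (Fin (2*m))) (f : Fin (2*m) → Fin (2*m)),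
      s ∩ (univ.filter (fun w => w < f w)) = s.filter (fun w => w < f w) := by
    intro s f
    ext w
    simp [Finset.mem_inter]
  -- assemble
  rw [prod_matching b h₁mem, prod_matching b h₂mem]
  rw [hsplit (univ.filter (fun w => w < f₁ w)) (fun w => b w (f₁ w)),
    hsplit (univ.filter (fun w => w < f₂ w)) (fun w => b w (f₂ w))]
  rw [← Finset.prod_mul_distrib]
  have hterm : ∀ s ∈ S, (∏ w ∈ s ∩ univ.filter (fun w => w < f₁ w), b w (f₁ w)) *
      (∏ w ∈ s ∩ univ.filter (fun w => w < f₂ w), b w (f₂ w)) =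
      -(2 * (g : R)) * ∏ w ∈ s, a w := by
    intro s hs
    rw [hSimg, Finset.mem_image] at hs
    obtain ⟨v, _, rfl⟩ := hs
    rw [hint, hint]
    exact hprodOf v
  rw [Finset.prod_congr rfl hterm, Finset.prod_mul_distrib, Finset.prod_const]
  rw [hScard]
  congr 1
  have hfin : ∏ s ∈ S, ∏ w ∈ s, a w = ∏ i, a i := by
    rw [hsplit univ a]
    exact Finset.prod_congr rfl (fun s _ => by rw [Finset.inter_univ])
  exact hfin
end

section
/- Fix integers n ≥ 1 and g ≥ 1. Let R be a commutative ℚ-algebra containing elements a_i (1 ≤ i ≤ n) and b_{ij} = b_{ji} (1 ≤ i < j ≤ n) satisfying, for all pairwise distinct indices i, j, k: a_i² = 0, a_i·b_{ij} = 0, b_{ij}² = −2g·a_i·a_j, and b_{ij}·b_{ik} = a_i·b_{jk}. Let (A,B) be a standard pair with standard monomial v = ∏_{i∈A} a_i · ∏_{{j,k}∈B} b_{jk}, and let v* = ∏_{i∈{1,…,n}∖(A∪⋃B)} a_i · ∏_{{j,k}∈B} b_{jk} be its dual. Then v · v* = (−2g)^{|B|} · ∏_{i=1}^{n} a_i. 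-/
/-- The diagonal entries of the intersection pairing: for a standard pair
`(A,B)` with standard monomial `v` and dual monomial `v*`, one has
`v·v* = (-2g)^{|B|} · ∏ᵢ aᵢ`. -/
theorem stmt_5 (n g : ℕ) (hn : 1 ≤ n) (hg : 1 ≤ g)
    (R : Type*) [CommRing R] [Algebra ℚ R]
    (a : Fin n → R) (b : Fin n → Fin n → R)
    (hsymm : ∀ i j, b i j = b j i)
    (ha2 : ∀ i, a i ^ 2 = 0)
    (hab : ∀ i j, i ≠ j → a i * b i j = 0)
    (hb2 : ∀ i j, i ≠ j → b i j ^ 2 = -(2 * (g : R)) * (a i * a j))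
    (hbb : ∀ i j k, i ≠ j → i ≠ k → j ≠ k → b i j * b i k = a i * b j k)
    (A : Finset (Fin n)) (B : Finset (Fin n × Fin n))
    (hAB : IsStandardPair A B) :
    ((∏ i ∈ A, a i) * ∏ p ∈ B, b p.1 p.2) *
      ((∏ i ∈ Finset.univ \ (A ∪ suppB B), a i) * ∏ p ∈ B, b p.1 p.2) =
    (-(2 * (g : R))) ^ B.card * ∏ i, a i := by
  obtain ⟨h1, h2⟩ := hAB
  have hdisj : (B : Set (Fin n × Fin n)).PairwiseDisjoint
      (fun p => ({p.1, p.2} : Finset (Fin n))) := by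
    intro p hp q hq hpq
    obtain ⟨e1, e2, e3, e4⟩ := h2 p hp q hq hpq
    simp only [Finset.disjoint_left, Finset.mem_insert, Finset.mem_singleton]
    rintro x (rfl | rfl) (h | h) <;> simp_all
  have hsupp : ∏ i ∈ suppB B, a i = ∏ p ∈ B, a p.1 * a p.2 := by
    rw [suppB, Finset.prod_biUnion hdisj]
    refine Finset.prod_congr rfl fun p hp => ?_
    exact Finset.prod_pair (h1 p hp).1.ne
  have hAdisj : Disjoint A (suppB B) := by
    simp only [Finset.disjoint_left, suppB, Finset.mem_biUnion, Finset.mem_insert,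
      Finset.mem_singleton, not_exists]
    rintro x hx p ⟨hp, rfl | rfl⟩
    · exact (h1 p hp).2.1 hx
    · exact (h1 p hp).2.2 hx
  have hbsq : (∏ p ∈ B, b p.1 p.2) ^ 2 =
      (-(2 * (g : R))) ^ B.card * ∏ p ∈ B, a p.1 * a p.2 := by
    rw [← Finset.prod_pow, ← Finset.prod_const, ← Finset.prod_mul_distrib]
    exact Finset.prod_congr rfl fun p hp => hb2 p.1 p.2 (h1 p hp).1.ne
  have key : ((∏ i ∈ A, a i) * ∏ i ∈ Finset.univ \ (A ∪ suppB B), a i) *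
      ∏ i ∈ suppB B, a i = ∏ i, a i := by
    rw [mul_right_comm, ← Finset.prod_union hAdisj,
      ← Finset.prod_sdiff (Finset.subset_univ (A ∪ suppB B)), mul_comm]
  calc ((∏ i ∈ A, a i) * ∏ p ∈ B, b p.1 p.2) *
      ((∏ i ∈ Finset.univ \ (A ∪ suppB B), a i) * ∏ p ∈ B, b p.1 p.2)
      = ((∏ i ∈ A, a i) * ∏ i ∈ Finset.univ \ (A ∪ suppB B), a i) *
        (∏ p ∈ B, b p.1 p.2) ^ 2 := by ring
    _ = (-(2 * (g : R))) ^ B.card * (((∏ i ∈ A, a i) *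
        ∏ i ∈ Finset.univ \ (A ∪ suppB B), a i) * ∏ i ∈ suppB B, a i) := by
        rw [hbsq, hsupp]; ring
    _ = (-(2 * (g : R))) ^ B.card * ∏ i, a i := by rw [key]
end

section
/- Let R be a commutative ring, n ≥ 1 an integer, and for every subset J ⊆ {1,…,n} with |J| ≥ 2 let D_J ∈ R be an element, such that D_J·D_{J′} = 0 whenever J ⊄ J′, J′ ⊄ J and J ∩ J′ ≠ ∅. Let 1 ≤ r₁ < r₂ < ⋯ < r_{k+1} ≤ n with k ≥ 0 and r_{j+1} ≥ r_j + 2 for 1 ≤ j ≤ k, and set I₀ := {1,…,r_{k+1}} and I_j := {r_j+1,…,r_{j+1}} for 1 ≤ j ≤ k; assume I₀ has at least two elements. Suppose given subsets J_i ⊆ {1,…,n} for each i ∈ {2,…,r₁} with {1,i} ⊆ J_i, and subsets J_{r_j+1} ⊆ {1,…,n} for each 1 ≤ j ≤ k with {1, r_j+1} ⊆ J_{r_j+1}, such that I₀ ⊄ J_i for every index i occurring. Then ∏_{i=2}^{r₁} D_{J_i} · ∏_{j=1}^{k} D_{J_{r_j+1}} · ∏_{j=1}^{k} D_{I_j} =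 0. -/
/-- (Section 9, part (4) of the paper.) Given classes `D_J` indexed by
subsets `J ⊆ {1,…,n}` with at least two elements, whose products vanish whenever the index
sets are neither nested nor disjoint, and data `1 ≤ r₁ < ⋯ < r_{k+1} ≤ n` with
`r_{j+1} ≥ r_j + 2`, `I₀ = {1,…,r_{k+1}}`, `I_j = {r_j+1,…,r_{j+1}}`, together with
subsets `J_i ∋ 1, i` (for `2 ≤ i ≤ r₁`) and `J_{r_j+1} ∋ 1, r_j+1` (for `1 ≤ j ≤ k`),
none of which contains `I₀`, the monomial
`∏ᵢ D_{J_i} · ∏ⱼ D_{J_{r_j+1}} · ∏ⱼ D_{I_j}` vanishes. -/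
theorem stmt_8 (R : Type*) [CommRing R] (n : ℕ) (hn : 1 ≤ n)
    (D : Finset ℕ → R)
    (hD : ∀ J J' : Finset ℕ, J ⊆ Finset.Icc 1 n → J' ⊆ Finset.Icc 1 n →
      2 ≤ J.card → 2 ≤ J'.card → ¬J ⊆ J' → ¬J' ⊆ J → (J ∩ J').Nonempty →
      D J * D J' = 0)
    (k : ℕ) (r : ℕ → ℕ)
    (hr1 : 1 ≤ r 1)
    (hrn : r (k + 1) ≤ n)
    (hrstep : ∀ j, 1 ≤ j → j ≤ k → r j + 2 ≤ r (j + 1))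
    (hI : 2 ≤ r (k + 1))
    (J : ℕ → Finset ℕ)
    (hJsub : ∀ i, 2 ≤ i → i ≤ r 1 → J i ⊆ Finset.Icc 1 n)
    (hJmem : ∀ i, 2 ≤ i → i ≤ r 1 → 1 ∈ J i ∧ i ∈ J i)
    (hJnot : ∀ i, 2 ≤ i → i ≤ r 1 → ¬Finset.Icc 1 (r (k + 1)) ⊆ J i)
    (hJsub' : ∀ j, 1 ≤ j → j ≤ k → J (r j + 1) ⊆ Finset.Icc 1 n)
    (hJmem' : ∀ j, 1 ≤ j → j ≤ k → 1 ∈ J (r j + 1) ∧ r j + 1 ∈ J (r j + 1))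
    (hJnot' : ∀ j, 1 ≤ j → j ≤ k → ¬Finset.Icc 1 (r (k + 1)) ⊆ J (r j + 1)) :
    (∏ i ∈ Finset.Icc 2 (r 1), D (J i)) *
      (∏ j ∈ Finset.Icc 1 k, D (J (r j + 1))) *
      (∏ j ∈ Finset.Icc 1 k, D (Finset.Icc (r j + 1) (r (j + 1)))) = 0 := by

  classical
  -- monotonicity of r on [1, k+1]
  have hmono : ∀ b, b ≤ k + 1 → ∀ a, 1 ≤ a → a ≤ b → r a ≤ r b := by
    intro b
    induction b with
    | zero => intro _ a ha hab; omega
    | succ c ih =>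
      intro hb a ha hab
      rcases Nat.lt_or_ge a (c + 1) with h | h
      · have h1 : r a ≤ r c := ih (by omega) a ha (by omega)
        have h2 := hrstep c (by omega) (by omega)
        omega
      · have : a = c + 1 := by omega
        subst this; exact le_rfl
  have hsmono : ∀ a b, 1 ≤ a → a < b → b ≤ k + 1 → r a + 2 ≤ r b := by
    intro a b ha hab hb
    have h1 := hrstep a ha (by omega)
    have h2 := hmono b hb (a + 1) (by omega) (by omega)
    omega
  set T := Finset.Icc 2 (r 1) ∪ (Finset.Icc 1 k).image (fun j => r j + 1) with hT
  have hdisj : Disjoint (Finset.Icc 2 (r 1)) ((Finset.Icc 1 k).image (fun j => r j + 1)) := by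
    rw [Finset.disjoint_left]
    intro i hi hi'
    simp only [Finset.mem_image, Finset.mem_Icc] at hi hi'
    obtain ⟨j, hj, rfl⟩ := hi'
    have := hmono j (by omega) 1 le_rfl hj.1
    omega
  have hinj : ∀ x ∈ Finset.Icc 1 k, ∀ y ∈ Finset.Icc 1 k, r x + 1 = r y + 1 → x = y := by
    intro x hx y hy hxy
    simp only [Finset.mem_Icc] at hx hy
    rcases Nat.lt_trichotomy x y with h | h | h
    · have := hsmono x y hx.1 h (by omega); omega
    · exact h
    · have := hsmono y x hy.1 h (by omega); omega
  have hprodT : (∏ i ∈ Finset.Icc 2 (r 1), D (J i)) *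
      (∏ j ∈ Finset.Icc 1 k, D (J (r j + 1))) = ∏ i ∈ T, D (J i) := by
    rw [hT, Finset.prod_union hdisj, Finset.prod_image hinj]
  have hTprop : ∀ i ∈ T, 2 ≤ i ∧ 1 ∈ J i ∧ i ∈ J i ∧ J i ⊆ Finset.Icc 1 n ∧
      ¬Finset.Icc 1 (r (k + 1)) ⊆ J i := by
    intro i hi
    rw [hT, Finset.mem_union] at hi
    rcases hi with hi | hi
    · rw [Finset.mem_Icc] at hi
      exact ⟨hi.1, (hJmem i hi.1 hi.2).1, (hJmem i hi.1 hi.2).2, hJsub i hi.1 hi.2,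
        hJnot i hi.1 hi.2⟩
    · simp only [Finset.mem_image, Finset.mem_Icc] at hi
      obtain ⟨j, hj, rfl⟩ := hi
      have h1 := hmono j (by omega) 1 le_rfl hj.1
      exact ⟨by omega, (hJmem' j hj.1 hj.2).1, (hJmem' j hj.1 hj.2).2, hJsub' j hj.1 hj.2,
        hJnot' j hj.1 hj.2⟩
  have hcardJ : ∀ i ∈ T, 2 ≤ (J i).card := by
    intro i hi
    obtain ⟨h2, h1m, him, -, -⟩ := hTprop i hi
    have : 1 < (J i).card := Finset.one_lt_card.mpr ⟨1, h1m, i, him, by omega⟩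
    omega
  rw [hprodT]
  by_cases hcross : ∃ i ∈ T, ∃ j ∈ T, ¬J i ⊆ J j ∧ ¬J j ⊆ J i
  · obtain ⟨i, hi, j, hj, h1, h2⟩ := hcross
    have hij : i ≠ j := by rintro rfl; exact h1 le_rfl
    have hzero : D (J i) * D (J j) = 0 :=
      hD _ _ (hTprop i hi).2.2.2.1 (hTprop j hj).2.2.2.1 (hcardJ i hi) (hcardJ j hj) h1 h2
        ⟨1, Finset.mem_inter.mpr ⟨(hTprop i hi).2.1, (hTprop j hj).2.1⟩⟩
    have hdvd : D (J i) * D (J j) ∣ ∏ i ∈ T, D (J i) := by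
      rw [← Finset.mul_prod_erase T _ hi]
      exact mul_dvd_mul dvd_rfl
        (Finset.dvd_prod_of_mem _ (Finset.mem_erase.mpr ⟨hij.symm, hj⟩))
    obtain ⟨c, hc⟩ := hdvd
    rw [hc, hzero, zero_mul, zero_mul]
  · push_neg at hcross
    -- all J-sets pairwise nested; find the maximal one
    have hTne : T.Nonempty := by
      rcases Nat.lt_or_ge (r 1) 2 with h | h
      · have hk : 1 ≤ k := by
          by_contra hk
          have hk0 : k = 0 := by omega
          rw [hk0, Nat.zero_add] at hI
          omega
        exact ⟨r 1 + 1, by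
          rw [hT, Finset.mem_union]
          right
          exact Finset.mem_image.mpr ⟨1, Finset.mem_Icc.mpr ⟨le_rfl, hk⟩, rfl⟩⟩
      · exact ⟨2, by rw [hT, Finset.mem_union]; left; exact Finset.mem_Icc.mpr ⟨le_rfl, h⟩⟩
    obtain ⟨m, hmT, hmax⟩ := T.exists_max_image (fun i => (J i).card) hTne
    have hMmax : ∀ i ∈ T, J i ⊆ J m := by
      intro i hi
      by_cases h : J i ⊆ J m
      · exact h
      · have h2 := hcross i hi m hmT h
        have heq := Finset.eq_of_subset_of_card_le h2 (hmax i hi)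
        rw [heq]
    have hcover : ∀ i ∈ T, i ∈ J m := fun i hi => hMmax i hi (hTprop i hi).2.2.1
    obtain ⟨x, hxI, hxM⟩ := Finset.not_subset.mp (hTprop m hmT).2.2.2.2
    rw [Finset.mem_Icc] at hxI
    have hx1 : x ≠ 1 := by rintro rfl; exact hxM (hTprop m hmT).2.1
    have hxr1 : r 1 < x := by
      by_contra h
      have hxT : x ∈ T := by
        rw [hT, Finset.mem_union]
        left
        rw [Finset.mem_Icc]
        omega
      exact hxM (hcover x hxT)
    have hk : 1 ≤ k := by
      by_contra hk
      have hk0 : k = 0 := by omega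
      rw [hk0, Nat.zero_add] at hxI
      omega
    -- find j with r j < x ≤ r (j+1)
    set s := (Finset.Icc 1 k).filter (fun j => r j < x) with hs
    have h1s : 1 ∈ s := by
      rw [hs, Finset.mem_filter, Finset.mem_Icc]; exact ⟨⟨le_rfl, hk⟩, hxr1⟩
    have hsne : s.Nonempty := ⟨1, h1s⟩
    set j := s.max' hsne with hj
    have hjs : j ∈ s := s.max'_mem hsne
    rw [hs, Finset.mem_filter, Finset.mem_Icc] at hjs
    obtain ⟨⟨hj1, hjk⟩, hjx⟩ := hjs
    have hxup : x ≤ r (j + 1) := by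
      rcases Nat.eq_or_lt_of_le hjk with h | h
      · rw [h]; exact hxI.2
      · by_contra hcon
        have hmem : j + 1 ∈ s := by
          rw [hs, Finset.mem_filter, Finset.mem_Icc]
          exact ⟨⟨by omega, by omega⟩, by omega⟩
        have := s.le_max' (j + 1) hmem
        omega
    set Ij := Finset.Icc (r j + 1) (r (j + 1)) with hIj
    have hrj1 : 1 ≤ r j := le_trans hr1 (hmono j (by omega) 1 le_rfl hj1)
    have hstepj := hrstep j hj1 hjk
    have hrjn : r (j + 1) ≤ n := le_trans (hmono (k + 1) le_rfl (j + 1) (by omega) (by omega)) hrn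
    have hIjsub : Ij ⊆ Finset.Icc 1 n := by
      intro y hy
      rw [hIj, Finset.mem_Icc] at hy
      rw [Finset.mem_Icc]
      omega
    have hIjcard : 2 ≤ Ij.card := by
      rw [hIj, Nat.card_Icc]; omega
    have hMnotIj : ¬J m ⊆ Ij := by
      intro h
      have := h (hTprop m hmT).2.1
      rw [hIj, Finset.mem_Icc] at this
      omega
    have hIjnotM : ¬Ij ⊆ J m := by
      intro h
      exact hxM (h (by rw [hIj, Finset.mem_Icc]; omega))
    have hrjM : r j + 1 ∈ J m := hcover (r j + 1) (by
      rw [hT, Finset.mem_union]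
      right
      exact Finset.mem_image.mpr ⟨j, Finset.mem_Icc.mpr ⟨hj1, hjk⟩, rfl⟩)
    have hzero : D (J m) * D Ij = 0 :=
      hD _ _ (hTprop m hmT).2.2.2.1 hIjsub (hcardJ m hmT) hIjcard hMnotIj hIjnotM
        ⟨r j + 1, Finset.mem_inter.mpr ⟨hrjM, by rw [hIj, Finset.mem_Icc]; omega⟩⟩
    have hdvd : D (J m) * D Ij ∣ (∏ i ∈ T, D (J i)) *
        ∏ j ∈ Finset.Icc 1 k, D (Finset.Icc (r j + 1) (r (j + 1))) := by
      refine mul_dvd_mul (Finset.dvd_prod_of_mem _ hmT) ?_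
      exact Finset.dvd_prod_of_mem _ (Finset.mem_Icc.mpr ⟨hj1, hjk⟩)
    obtain ⟨c, hc⟩ := hdvd
    rw [hc, hzero, zero_mul]
end

section
/- Let R be a commutative ring, n ≥ 1 an integer, and for every subset J ⊆ {1,…,n} with |J| ≥ 2 let D_J ∈ R be an element, such that D_J·D_{J′} = 0 whenever J ⊄ J′, J′ ⊄ J and J ∩ J′ ≠ ∅. Let I ⊆ {1,…,n} with |I| ≥ 3 and let i ∈ I. Suppose that for each j ∈ I∖{i} a subset J_j ⊆ {1,…,n} is given with {i,j} ⊆ J_j and I ⊄ J_j. Then ∏_{j ∈ I∖{i}} D_{J_j} = 0. -/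
/-- (Section 9, part (5) of the paper.) Given classes `D_J` indexed by
subsets `J ⊆ {1,…,n}` with at least two elements, whose products vanish whenever the index
sets are neither nested nor disjoint, a subset `I` with `|I| ≥ 3`, an element `i ∈ I`, and
for each `j ∈ I∖{i}` a subset `J_j` with `{i,j} ⊆ J_j` and `I ⊄ J_j`, the monomial
`∏_{j ∈ I∖{i}} D_{J_j}` vanishes. -/
theorem stmt_9 (R : Type*) [CommRing R] (n : ℕ) (hn : 1 ≤ n)
    (D : Finset ℕ → R)
    (hD : ∀ J J' : Finset ℕ, J ⊆ Finset.Icc 1 n → J' ⊆ Finset.Icc 1 n →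
      2 ≤ J.card → 2 ≤ J'.card → ¬J ⊆ J' → ¬J' ⊆ J → (J ∩ J').Nonempty →
      D J * D J' = 0)
    (I : Finset ℕ) (hIsub : I ⊆ Finset.Icc 1 n) (hIcard : 3 ≤ I.card)
    (i : ℕ) (hi : i ∈ I)
    (J : ℕ → Finset ℕ)
    (hJsub : ∀ j ∈ I.erase i, J j ⊆ Finset.Icc 1 n)
    (hJmem : ∀ j ∈ I.erase i, i ∈ J j ∧ j ∈ J j)
    (hJnot : ∀ j ∈ I.erase i, ¬I ⊆ J j) :
    ∏ j ∈ I.erase i, D (J j) = 0 := by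
  set S := I.erase i with hS
  have hcard2 : ∀ j ∈ S, 2 ≤ (J j).card := by
    intro j hj
    have hji : j ≠ i := (Finset.mem_erase.mp hj).1
    obtain ⟨h1, h2⟩ := hJmem j hj
    have : ({i, j} : Finset ℕ) ⊆ J j := by
      intro x hx
      rcases Finset.mem_insert.mp hx with rfl | hx
      · exact h1
      · exact (Finset.mem_singleton.mp hx) ▸ h2
    calc 2 = ({i, j} : Finset ℕ).card := by
            rw [Finset.card_insert_of_notMem (by simp [hji.symm]), Finset.card_singleton]
      _ ≤ (J j).card := Finset.card_le_card this
  by_cases hchain : ∀ j ∈ S, ∀ j' ∈ S, J j ⊆ J j' ∨ J j' ⊆ J j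
  · -- chain: pick element of maximal card; it contains I, contradiction
    have hSne : S.Nonempty := by
      rw [← Finset.card_pos, hS, Finset.card_erase_of_mem hi]
      omega
    obtain ⟨m, hm, hmax⟩ := S.exists_max_image (fun j => (J j).card) hSne
    exfalso
    apply hJnot m hm
    intro x hx
    by_cases hxi : x = i
    · exact hxi ▸ (hJmem m hm).1
    · have hxS : x ∈ S := Finset.mem_erase.mpr ⟨hxi, hx⟩
      rcases hchain x hxS m hm with h | h
      · exact h (hJmem x hxS).2
      · have heq : J m = J x := Finset.eq_of_subset_of_card_le h (hmax x hxS)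
        rw [heq]; exact (hJmem x hxS).2
  · push_neg at hchain
    obtain ⟨j, hj, j', hj', h1, h2⟩ := hchain
    have hzero : D (J j) * D (J j') = 0 :=
      hD (J j) (J j') (hJsub j hj) (hJsub j' hj') (hcard2 j hj) (hcard2 j' hj') h1 h2
        ⟨i, Finset.mem_inter.mpr ⟨(hJmem j hj).1, (hJmem j' hj').1⟩⟩
    have hne : j ≠ j' := by rintro rfl; exact h1 (le_refl _)
    rw [← Finset.mul_prod_erase S _ hj,
        ← Finset.mul_prod_erase (S.erase j) _ (Finset.mem_erase.mpr ⟨hne.symm, hj'⟩),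
        ← mul_assoc, hzero, zero_mul]
end

section
/- Work in the multivariate polynomial ring over ℚ with variables Ψ and p_{i,j} for all integers i, j ≥ 0, with the convention that any symbol p_{i,j} with i < 0 or j < 0 denotes 0. Define the operator 𝒟 on this ring by 𝒟(Q) = (1/2)·Σ_{i,j,k,l ≥ 0} (Ψ·p_{i−1,j−1}·p_{k−1,l−1} − C(i+k−2, i−1)·p_{i+k−2,j+l})·∂_{p_{i,j}}∂_{p_{k,l}}(Q) + Σ_{i,j ≥ 0} p_{i−2,j}·∂_{p_{i,j}}(Q), where C(a,b) denotes the binomial coefficient (with C(a,b) = 0 if b < 0 or b > a), and where for each polynomial Q only finitely many partial derivatives ∂_{p_{i,j}}(Q) are nonzero so all sums are finite. Then for every integer m ≥ 2: 𝒟(p_{3,1}·p_{m+1,m−1}) = Ψ·p_{2,0}·p_{m,m−2} − C(m+2,2)·p_{m+2,m} + p_{1,1}·p_{m+1,m−1} + p_{m−1,m−1}·p_{3,1}. -/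
open MvPolynomial

/-- Variables of the tautological ring of the universal Jacobian: `none` is `Ψ`, and
`some (i,j)` is `p_{i,j}`. -/
abbrev JacVar := Option (ℕ × ℕ)

/-- `p_{i,j}` for integer indices, with the convention that it is `0` if `i < 0` or
`j < 0`. -/
noncomputable def Pz (i j : ℤ) : MvPolynomial JacVar ℚ :=
  if 0 ≤ i ∧ 0 ≤ j then X (some (i.toNat, j.toNat)) else 0

/-- The binomial coefficient `C(a,b)` for integers, with `C(a,b) = 0` if `b < 0` or
`b > a`. -/
def binomZ (a b : ℤ) : ℚ :=
  if 0 ≤ b ∧ b ≤ a then ((a.toNat).choose b.toNat : ℚ) else 0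

/-- The (finitely many) pairs `(i,j)` such that `p_{i,j}` occurs in `Q`; only these
contribute nonzero partial derivatives. -/
noncomputable def pIndices (Q : MvPolynomial JacVar ℚ) : Finset (ℕ × ℕ) :=
  Q.vars.biUnion fun v => v.elim ∅ fun p => {p}

/-- The differential operator `𝒟` realizing the lowering operator of the `sl₂`-action:
`𝒟(Q) = ½ Σ_{i,j,k,l} (Ψ p_{i-1,j-1} p_{k-1,l-1} - C(i+k-2, i-1) p_{i+k-2,j+l})
∂_{p_{i,j}}∂_{p_{k,l}}(Q) + Σ_{i,j} p_{i-2,j} ∂_{p_{i,j}}(Q)`, the sums being effectively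
finite since only variables occurring in `Q` give nonzero derivatives. -/
noncomputable def Dop (Q : MvPolynomial JacVar ℚ) : MvPolynomial JacVar ℚ :=
  C (1 / 2 : ℚ) *
      ∑ x ∈ pIndices Q ×ˢ pIndices Q,
        (X none * Pz ((x.1.1 : ℤ) - 1) ((x.1.2 : ℤ) - 1) *
              Pz ((x.2.1 : ℤ) - 1) ((x.2.2 : ℤ) - 1)
            - C (binomZ ((x.1.1 : ℤ) + (x.2.1 : ℤ) - 2) ((x.1.1 : ℤ) - 1)) *
              Pz ((x.1.1 : ℤ) + (x.2.1 : ℤ) - 2) ((x.1.2 : ℤ) + (x.2.2 : ℤ))) *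
          pderiv (some x.1) (pderiv (some x.2) Q)
    + ∑ x ∈ pIndices Q, Pz ((x.1 : ℤ) - 2) (x.2 : ℤ) * pderiv (some x) Q

lemma vars_XX (u v : JacVar) : (X u * X v : MvPolynomial JacVar ℚ).vars = {u, v} := by
  have h1 : (X u * X v : MvPolynomial JacVar ℚ)
      = monomial (Finsupp.single u 1 + Finsupp.single v 1) (1 : ℚ) := by
    rw [X, X, monomial_mul, one_mul]
  rw [h1, vars_monomial one_ne_zero]
  ext a
  simp only [Finsupp.mem_support_iff, Finsupp.add_apply, Finsupp.single_apply,
    Finset.mem_insert, Finset.mem_singleton]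
  by_cases hu : u = a <;> by_cases hv : v = a <;> simp_all [eq_comm]

lemma pIndices_XX (u v : ℕ × ℕ) :
    pIndices (X (some u) * X (some v)) = {u, v} := by
  rw [pIndices, vars_XX]
  ext a
  simp only [Finset.mem_biUnion, Finset.mem_insert, Finset.mem_singleton]
  constructor
  · rintro ⟨w, hw, ha⟩
    rcases hw with rfl | rfl <;> simp_all
  · rintro (rfl | rfl)
    exacts [⟨some a, Or.inl rfl, by simp⟩, ⟨some a, Or.inr rfl, by simp⟩]

lemma Pz_eq {i j : ℤ} (a b : ℕ) (hi : i = a) (hj : j = b) :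
    Pz i j = X (some (a, b)) := by
  subst hi hj; simp [Pz]

lemma binomZ_eq {i j : ℤ} (a b : ℕ) (hi : i = a) (hj : j = b) (h : b ≤ a) :
    binomZ i j = (a.choose b : ℚ) := by
  subst hi hj
  simp [binomZ, h]

/-- For every `m ≥ 2`,
`𝒟(p_{3,1} p_{m+1,m-1}) = Ψ p_{2,0} p_{m,m-2} - C(m+2,2) p_{m+2,m}
  + p_{1,1} p_{m+1,m-1} + p_{m-1,m-1} p_{3,1}`. -/
theorem stmt_10 (m : ℕ) (hm : 2 ≤ m) :
    Dop (X (some (3, 1)) * X (some (m + 1, m - 1))) =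
      X none * X (some (2, 0)) * X (some (m, m - 2))
        - C (((m + 2).choose 2 : ℚ)) * X (some (m + 2, m))
        + X (some (1, 1)) * X (some (m + 1, m - 1))
        + X (some (m - 1, m - 1)) * X (some (3, 1)) := by
  rcases Nat.lt_or_ge m 3 with h3 | h3
  · -- m = 2
    interval_cases m
    rw [Dop, pIndices_XX]
    norm_num
    rw [show Pz (2:ℤ) 0 = X (some (2,0)) from Pz_eq 2 0 (by norm_num) (by norm_num),
      show Pz (4:ℤ) 2 = X (some (4,2)) from Pz_eq 4 2 (by norm_num) (by norm_num),
      show Pz (1:ℤ) 1 = X (some (1,1)) from Pz_eq 1 1 (by norm_num) (by norm_num),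
      show binomZ 4 2 = ((4).choose 2 : ℚ) from binomZ_eq 4 2 (by norm_num) (by norm_num) (by norm_num)]
    have hhalf : (C (1/2 : ℚ) : MvPolynomial JacVar ℚ) * 2 = 1 := by
      rw [show (2 : MvPolynomial JacVar ℚ) = C 2 from (map_ofNat C 2).symm, ← C_mul]
      norm_num
    simp only [map_natCast]
    linear_combination (X none * X (some (2,0)) * X (some (2,0))
      - (((4).choose 2 : ℕ) : MvPolynomial JacVar ℚ) * X (some (4,2))) * hhalf
  · obtain ⟨k, rfl⟩ : ∃ k, m = k + 3 := ⟨m - 3, by omega⟩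
    have hne : ((3, 1) : ℕ × ℕ) ≠ (k + 4, k + 2) := by simp
    have e1 : k + 3 + 1 = k + 4 := by omega
    have e2 : k + 3 - 1 = k + 2 := by omega
    have e3 : k + 3 - 2 = k + 1 := by omega
    rw [e1, e2, e3, Dop, pIndices_XX, Finset.sum_product, Finset.sum_pair hne,
      Finset.sum_pair hne, Finset.sum_pair hne, Finset.sum_pair hne]
    simp only [pderiv_mul, pderiv_X_self, pderiv_X_of_ne (by simp : some ((3:ℕ),(1:ℕ)) ≠ some (k+4, k+2)),
      pderiv_X_of_ne (by simp : some (k+4, k+2) ≠ some ((3:ℕ),(1:ℕ))), mul_one, one_mul, mul_zero, zero_mul,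
      add_zero, zero_add, map_zero]
    rw [show Pz (((3:ℕ):ℤ) - 1) (((1:ℕ):ℤ) - 1) = X (some (2,0)) from
        Pz_eq 2 0 (by push_cast; try ring) (by push_cast; try ring),
      show Pz (((k+4:ℕ):ℤ) - 1) (((k+2:ℕ):ℤ) - 1) = X (some (k+3,k+1)) from
        Pz_eq (k+3) (k+1) (by push_cast; try ring) (by push_cast; try ring),
      show Pz (((3:ℕ):ℤ) + ((k+4:ℕ):ℤ) - 2) (((1:ℕ):ℤ) + ((k+2:ℕ):ℤ)) = X (some (k+5,k+3)) from
        Pz_eq (k+5) (k+3) (by push_cast; try ring) (by push_cast; try ring),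
      show Pz (((k+4:ℕ):ℤ) + ((3:ℕ):ℤ) - 2) (((k+2:ℕ):ℤ) + ((1:ℕ):ℤ)) = X (some (k+5,k+3)) from
        Pz_eq (k+5) (k+3) (by push_cast; try ring) (by push_cast; try ring),
      show Pz (((3:ℕ):ℤ) - 2) ((1:ℕ):ℤ) = X (some (1,1)) from
        Pz_eq 1 1 (by push_cast; try ring) (by push_cast; try ring),
      show Pz (((k+4:ℕ):ℤ) - 2) ((k+2:ℕ):ℤ) = X (some (k+2,k+2)) from
        Pz_eq (k+2) (k+2) (by push_cast; try ring) (by push_cast; try ring),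
      show binomZ (((3:ℕ):ℤ) + ((k+4:ℕ):ℤ) - 2) (((3:ℕ):ℤ) - 1) = ((k+5).choose 2 : ℚ) from
        binomZ_eq (k+5) 2 (by push_cast; try ring) (by push_cast; try ring) (by omega),
      show binomZ (((k+4:ℕ):ℤ) + ((3:ℕ):ℤ) - 2) (((k+4:ℕ):ℤ) - 1) = ((k+5).choose (k+3) : ℚ) from
        binomZ_eq (k+5) (k+3) (by push_cast; try ring) (by push_cast; try ring) (by omega),
      show (k+5).choose (k+3) = (k+5).choose 2 by
        rw [show k+3 = (k+5)-2 by omega, Nat.choose_symm (by omega)],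
      show k+3+2 = k+5 from by omega, show k+3+1 = k+4 from rfl]
    have hhalf : (C (1/2 : ℚ) : MvPolynomial JacVar ℚ) * 2 = 1 := by
      rw [show (2 : MvPolynomial JacVar ℚ) = C 2 from (map_ofNat C 2).symm, ← C_mul]
      norm_num
    simp only [map_natCast]
    linear_combination (X none * X (some (2,0)) * X (some (k+3,k+1))
      - ((((k+5).choose 2 : ℕ)) : MvPolynomial JacVar ℚ) * X (some (k+5,k+3))) * hhalf
end

section
/- Fix an integer n ≥ 1 and a family I₁,…,I_m of distinct subsets of {1,…,n}, each with at least 3 elements, that is non-crossing: any two members are nested or disjoint. For each r, call I_r external if no member is strictly contained in I_r, and internal otherwise; let deg(r) be the number of maximal members strictly contained in I_r, and set c_r := |I_r| − 1 if I_r is external, and c_r := |I_r| − |⋃_{I_s ⊊ I_r} I_s| + deg(r) − 1 if I_r is internal. Let J₁,…,J_s be the maximal members of the family, α_t := min J_t, and S := {α₁,…,α_s} ∪ ({1,…,n} ∖ ⋃_r I_r). Call a triple (A, B, (i_r)_{r=1}^m) a standard datum if A ⊆ S, B is a set of pairwise disjoint two-element subsets of S∖A, and the i_r are integers with 1 ≤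 i_r ≤ min(|I_r| − 2, c_r − 1) for every r; its degree is |A| + |B| + Σ_r i_r. Define the dual of (A, B, (i_r)) to be (S ∖ (A ∪ ⋃B), B, (c_r − i_r)). Then: (1) the dual of a standard datum is again a standard datum; (2) taking duals is an involution, i.e. the dual of the dual of a standard datum equals the original datum; and (3) the degree of a standard datum plus the degree of its dual equals n. -/
open scoped Classical

/-- `I r` is *external* if no member of the family is strictly contained in it. -/
def IsExternal {m : ℕ} (I : Fin m → Finset ℕ) (r : Fin m) : Prop :=
  ∀ s, ¬I s ⊂ I r

/-- `I r` is a *root* if it is a maximal member of the family. -/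
def IsRoot {m : ℕ} (I : Fin m → Finset ℕ) (r : Fin m) : Prop :=
  ∀ s, ¬I r ⊂ I s

/-- `deg(r)`: the number of maximal members of the family strictly contained in `I r`. -/
noncomputable def degOf {m : ℕ} (I : Fin m → Finset ℕ) (r : Fin m) : ℕ :=
  (Finset.univ.filter fun s => I s ⊂ I r ∧ ∀ t, ¬(I s ⊂ I t ∧ I t ⊂ I r)).card

/-- The union `⋃_{I s ⊊ I r} I s`. -/
noncomputable def subUnion {m : ℕ} (I : Fin m → Finset ℕ) (r : Fin m) : Finset ℕ :=
  (Finset.univ.filter fun s => I s ⊂ I r).biUnion I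

/-- The quantity `c_r`: `|I_r| - 1` if `I_r` is external, and
`|I_r| - |⋃_{I_s ⊊ I_r} I_s| + deg(r) - 1` if `I_r` is internal. -/
noncomputable def cOf {m : ℕ} (I : Fin m → Finset ℕ) (r : Fin m) : ℤ :=
  if IsExternal I r then ((I r).card : ℤ) - 1
  else ((I r).card : ℤ) - ((subUnion I r).card : ℤ) + (degOf I r : ℤ) - 1

/-- The set `S = {α₁,…,α_s} ∪ ({1,…,n} ∖ ⋃ᵣ Iᵣ)`, where the `α_t` are the minima of the
maximal members of the family. -/
noncomputable def Sset {m : ℕ} (n : ℕ) (I : Fin m → Finset ℕ) : Finset ℕ :=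
  ((Finset.univ.filter fun r => IsRoot I r).image fun r => WithTop.untopD 0 (I r).min) ∪
    (Finset.Icc 1 n \ Finset.univ.biUnion I)

/-- A *standard datum* `(A, B, (i_r))`: `A ⊆ S`, `B` a set of pairwise disjoint
two-element subsets of `S ∖ A` (encoded as increasing pairs), and integers `i_r` with
`1 ≤ i_r ≤ min(|I_r| - 2, c_r - 1)`. -/
def IsStandardDatum {m : ℕ} (n : ℕ) (I : Fin m → Finset ℕ)
    (A : Finset ℕ) (B : Finset (ℕ × ℕ)) (iv : Fin m → ℤ) : Prop :=
  A ⊆ Sset n I ∧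
  (∀ p ∈ B, p.1 < p.2 ∧ p.1 ∈ Sset n I \ A ∧ p.2 ∈ Sset n I \ A) ∧
  (∀ p ∈ B, ∀ q ∈ B, p ≠ q → p.1 ≠ q.1 ∧ p.1 ≠ q.2 ∧ p.2 ≠ q.1 ∧ p.2 ≠ q.2) ∧
  ∀ r, 1 ≤ iv r ∧ iv r ≤ min (((I r).card : ℤ) - 2) (cOf I r - 1)

/-- The degree `|A| + |B| + Σ_r i_r` of a standard datum. -/
noncomputable def degDatum {m : ℕ} (A : Finset ℕ) (B : Finset (ℕ × ℕ))
    (iv : Fin m → ℤ) : ℤ :=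
  (A.card : ℤ) + (B.card : ℤ) + ∑ r, iv r

/-- The `A`-part of the dual datum: `S ∖ (A ∪ ⋃B)`. -/
noncomputable def dualA {m : ℕ} (n : ℕ) (I : Fin m → Finset ℕ)
    (A : Finset ℕ) (B : Finset (ℕ × ℕ)) : Finset ℕ :=
  Sset n I \ (A ∪ B.biUnion fun p => {p.1, p.2})

section Aux

variable {m : ℕ} {I : Fin m → Finset ℕ}

lemma min_untop'_mem {s : Finset ℕ} (h : s.Nonempty) : WithTop.untopD 0 s.min ∈ s := by
  rw [← Finset.coe_min' h, WithTop.untopD_coe]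
  exact Finset.min'_mem s h

lemma I_nonempty (hcard : ∀ r, 3 ≤ (I r).card) (r : Fin m) : (I r).Nonempty :=
  Finset.card_pos.mp (by have := hcard r; omega)

lemma subUnion_subset (I : Fin m → Finset ℕ) (r : Fin m) : subUnion I r ⊆ I r := by
  intro x hx
  simp only [subUnion, Finset.mem_biUnion, Finset.mem_filter] at hx
  obtain ⟨s, ⟨-, hs⟩, hxs⟩ := hx
  exact hs.subset hxs

lemma cOf_eq (I : Fin m → Finset ℕ) (r : Fin m) :
    cOf I r = ((I r).card : ℤ) - ((subUnion I r).card : ℤ) + (degOf I r : ℤ) - 1 := by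
  unfold cOf
  split_ifs with h
  · have hf : (Finset.univ.filter fun s => I s ⊂ I r) = ∅ :=
      Finset.filter_false_of_mem (fun s _ => h s)
    have h1 : subUnion I r = ∅ := by
      rw [subUnion, hf]; simp
    have h2 : degOf I r = 0 := by
      rw [degOf, Finset.card_eq_zero]
      exact Finset.filter_false_of_mem (fun s _ hs => h s hs.1)
    rw [h1, h2]; simp
  · rfl

lemma child_disjoint (hinj : Function.Injective I)
    (hnc : ∀ r s, I r ⊆ I s ∨ I s ⊆ I r ∨ Disjoint (I r) (I s))
    {r s t : Fin m}
    (hs : I s ⊂ I r ∧ ∀ u, ¬(I s ⊂ I u ∧ I u ⊂ I r))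
    (ht : I t ⊂ I r ∧ ∀ u, ¬(I t ⊂ I u ∧ I u ⊂ I r))
    (hst : s ≠ t) : Disjoint (I s) (I t) := by
  have hne : I s ≠ I t := fun he => hst (hinj he)
  rcases hnc s t with h | h | h
  · exact absurd ⟨h.ssubset_of_ne hne, ht.1⟩ (hs.2 t)
  · exact absurd ⟨h.ssubset_of_ne (Ne.symm hne), hs.1⟩ (ht.2 s)
  · exact h

lemma degOf_le (hinj : Function.Injective I)
    (hcard : ∀ r, 3 ≤ (I r).card)
    (hnc : ∀ r s, I r ⊆ I s ∨ I s ⊆ I r ∨ Disjoint (I r) (I s))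
    (r : Fin m) : degOf I r ≤ (subUnion I r).card := by
  rw [degOf]
  apply Finset.card_le_card_of_injOn (fun s => WithTop.untopD 0 (I s).min)
  · intro s hs
    simp only [Finset.coe_filter, Set.mem_setOf_eq, Finset.mem_filter] at hs
    simp only [subUnion, Finset.mem_coe, Finset.mem_biUnion, Finset.mem_filter]
    exact ⟨s, ⟨Finset.mem_univ s, hs.2.1⟩, min_untop'_mem (I_nonempty hcard s)⟩
  · intro s hs t ht heq
    by_contra hne
    simp only [Finset.coe_filter, Set.mem_setOf_eq] at hs ht
    have hd := child_disjoint hinj hnc hs.2 ht.2 hne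
    have heq' : WithTop.untopD 0 (I s).min = WithTop.untopD 0 (I t).min := heq
    have hmem : WithTop.untopD 0 (I s).min ∈ I t := by
      rw [heq']; exact min_untop'_mem (I_nonempty hcard t)
    exact Finset.disjoint_left.mp hd (min_untop'_mem (I_nonempty hcard s)) hmem

lemma cOf_le (hinj : Function.Injective I)
    (hcard : ∀ r, 3 ≤ (I r).card)
    (hnc : ∀ r s, I r ⊆ I s ∨ I s ⊆ I r ∨ Disjoint (I r) (I s))
    (r : Fin m) : cOf I r ≤ ((I r).card : ℤ) - 1 := by
  rw [cOf_eq]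
  have h1 := degOf_le hinj hcard hnc r
  have h2 : (subUnion I r).card ≤ (I r).card :=
    Finset.card_le_card (subUnion_subset I r)
  omega

lemma priv_biUnion (hcard : ∀ r, 3 ≤ (I r).card) :
    Finset.univ.biUnion (fun r => I r \ subUnion I r) = Finset.univ.biUnion I := by
  apply Finset.Subset.antisymm
  · intro x hx
    simp only [Finset.mem_biUnion, Finset.mem_univ, true_and, Finset.mem_sdiff] at hx ⊢
    obtain ⟨r, hr, -⟩ := hx
    exact ⟨r, hr⟩
  · intro x hx
    simp only [Finset.mem_biUnion, Finset.mem_univ, true_and] at hx ⊢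
    obtain ⟨r, hr⟩ := hx
    obtain ⟨s, hs, hmin⟩ := Finset.exists_min_image
      (Finset.univ.filter fun t => x ∈ I t) (fun t => (I t).card) ⟨r, by simp [hr]⟩
    refine ⟨s, Finset.mem_sdiff.mpr ⟨(Finset.mem_filter.mp hs).2, ?_⟩⟩
    intro hx2
    simp only [subUnion, Finset.mem_biUnion, Finset.mem_filter] at hx2
    obtain ⟨t, ⟨-, ht⟩, hxt⟩ := hx2
    have := hmin t (by simp [hxt])
    exact absurd (Finset.card_lt_card ht) (not_lt.mpr this)

lemma priv_disjoint (hinj : Function.Injective I)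
    (hnc : ∀ r s, I r ⊆ I s ∨ I s ⊆ I r ∨ Disjoint (I r) (I s))
    {r s : Fin m} (hrs : r ≠ s) :
    Disjoint (I r \ subUnion I r) (I s \ subUnion I s) := by
  rw [Finset.disjoint_left]
  intro x hx hx'
  obtain ⟨hx1, hx2⟩ := Finset.mem_sdiff.mp hx
  obtain ⟨hx1', hx2'⟩ := Finset.mem_sdiff.mp hx'
  have hne : I r ≠ I s := fun h => hrs (hinj h)
  rcases hnc r s with h | h | h
  · exact hx2' (by
      simp only [subUnion, Finset.mem_biUnion, Finset.mem_filter]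
      exact ⟨r, ⟨Finset.mem_univ r, h.ssubset_of_ne hne⟩, hx1⟩)
  · exact hx2 (by
      simp only [subUnion, Finset.mem_biUnion, Finset.mem_filter]
      exact ⟨s, ⟨Finset.mem_univ s, h.ssubset_of_ne (Ne.symm hne)⟩, hx1'⟩)
  · exact Finset.disjoint_left.mp h hx1 hx1'

lemma sum_priv (hinj : Function.Injective I) (hcard : ∀ r, 3 ≤ (I r).card)
    (hnc : ∀ r s, I r ⊆ I s ∨ I s ⊆ I r ∨ Disjoint (I r) (I s)) :
    ∑ r, (I r \ subUnion I r).card = (Finset.univ.biUnion I).card := by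
  rw [← priv_biUnion hcard, Finset.card_biUnion]
  intro r _ s _ hrs
  exact priv_disjoint hinj hnc hrs

lemma sum_deg (hinj : Function.Injective I) (hcard : ∀ r, 3 ≤ (I r).card)
    (hnc : ∀ r s, I r ⊆ I s ∨ I s ⊆ I r ∨ Disjoint (I r) (I s)) :
    ∑ r, degOf I r = (Finset.univ.filter fun s => ¬ IsRoot I s).card := by
  have hun : (Finset.univ.filter fun s => ¬ IsRoot I s) =
      Finset.univ.biUnion (fun r => Finset.univ.filter
        fun s => I s ⊂ I r ∧ ∀ t, ¬(I s ⊂ I t ∧ I t ⊂ I r)) := by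
    ext s
    simp only [Finset.mem_filter, Finset.mem_biUnion, Finset.mem_univ, true_and,
      IsRoot, not_forall, not_not]
    constructor
    · rintro ⟨u, hu⟩
      obtain ⟨r, hr, hmin⟩ := Finset.exists_min_image
        (Finset.univ.filter fun t => I s ⊂ I t) (fun t => (I t).card) ⟨u, by simp [hu]⟩
      refine ⟨r, (Finset.mem_filter.mp hr).2, fun t ht => ?_⟩
      obtain ⟨h1, h2⟩ := ht
      have := hmin t (by simp [h1])
      exact absurd (Finset.card_lt_card h2) (not_lt.mpr this)
    · rintro ⟨r, h1, -⟩; exact ⟨r, h1⟩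
  have hcb : (Finset.univ.biUnion (fun r => Finset.univ.filter
      fun s => I s ⊂ I r ∧ ∀ t, ¬(I s ⊂ I t ∧ I t ⊂ I r))).card =
      ∑ r, (Finset.univ.filter
        fun s => I s ⊂ I r ∧ ∀ t, ¬(I s ⊂ I t ∧ I t ⊂ I r)).card := by
    apply Finset.card_biUnion
    intro r _ r' _ hne
    rw [Function.onFun, Finset.disjoint_left]
    intro s hs hs'
    simp only [Finset.mem_filter, Finset.mem_univ, true_and] at hs hs'
    have hIne : I r ≠ I r' := fun h => hne (hinj h)
    have hsne : (I s).Nonempty := I_nonempty hcard s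
    rcases hnc r r' with h | h | h
    · exact hs'.2 r ⟨hs.1, h.ssubset_of_ne hIne⟩
    · exact hs.2 r' ⟨hs'.1, h.ssubset_of_ne (Ne.symm hIne)⟩
    · obtain ⟨x, hx⟩ := hsne
      exact Finset.disjoint_left.mp h (hs.1.subset hx) (hs'.1.subset hx)
  rw [hun, hcb]
  rfl

lemma card_Sset {n : ℕ} (hn : 1 ≤ n) (hinj : Function.Injective I)
    (hsub : ∀ r, I r ⊆ Finset.Icc 1 n) (hcard : ∀ r, 3 ≤ (I r).card)
    (hnc : ∀ r s, I r ⊆ I s ∨ I s ⊆ I r ∨ Disjoint (I r) (I s)) :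
    (Sset n I).card = (Finset.univ.filter fun r => IsRoot I r).card
      + (n - (Finset.univ.biUnion I).card) := by
  have hUsub : Finset.univ.biUnion I ⊆ Finset.Icc 1 n := by
    intro x hx
    obtain ⟨r, -, hr⟩ := Finset.mem_biUnion.mp hx
    exact hsub r hr
  have himg : ((Finset.univ.filter fun r => IsRoot I r).image
      fun r => WithTop.untopD 0 (I r).min).card = (Finset.univ.filter fun r => IsRoot I r).card := by
    apply Finset.card_image_of_injOn
    intro r hr r' hr' heq
    simp only [Finset.coe_filter, Set.mem_setOf_eq] at hr hr'
    by_contra hne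
    have hIne : I r ≠ I r' := fun h => hne (hinj h)
    have hd : Disjoint (I r) (I r') := by
      rcases hnc r r' with h | h | h
      · exact absurd (h.ssubset_of_ne hIne) (hr.2 r')
      · exact absurd (h.ssubset_of_ne (Ne.symm hIne)) (hr'.2 r)
      · exact h
    have heq' : WithTop.untopD 0 (I r).min = WithTop.untopD 0 (I r').min := heq
    have hmem : WithTop.untopD 0 (I r).min ∈ I r' := by
      rw [heq']; exact min_untop'_mem (I_nonempty hcard r')
    exact Finset.disjoint_left.mp hd (min_untop'_mem (I_nonempty hcard r)) hmem
  have hdisj : Disjoint ((Finset.univ.filter fun r => IsRoot I r).image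
      fun r => WithTop.untopD 0 (I r).min) (Finset.Icc 1 n \ Finset.univ.biUnion I) := by
    rw [Finset.disjoint_left]
    intro x hx hx'
    obtain ⟨r, -, hr⟩ := Finset.mem_image.mp hx
    have : x ∈ Finset.univ.biUnion I :=
      Finset.mem_biUnion.mpr ⟨r, Finset.mem_univ r, hr ▸ min_untop'_mem (I_nonempty hcard r)⟩
    exact (Finset.mem_sdiff.mp hx').2 this
  rw [Sset, Finset.card_union_of_disjoint hdisj, himg,
    Finset.card_sdiff_of_subset hUsub, Nat.card_Icc]
  omega

end Aux

lemma key_identity {m n : ℕ} {I : Fin m → Finset ℕ} (hn : 1 ≤ n)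
    (hinj : Function.Injective I)
    (hsub : ∀ r, I r ⊆ Finset.Icc 1 n) (hcard : ∀ r, 3 ≤ (I r).card)
    (hnc : ∀ r s, I r ⊆ I s ∨ I s ⊆ I r ∨ Disjoint (I r) (I s)) :
    ((Sset n I).card : ℤ) + ∑ r, cOf I r = n := by
  have h1 : ∑ r, cOf I r =
      (∑ r, ((I r \ subUnion I r).card : ℤ)) + (∑ r, (degOf I r : ℤ)) - m := by
    rw [Finset.sum_congr rfl (fun r _ => cOf_eq I r)]
    have hterm : ∀ r : Fin m,
        ((I r).card : ℤ) - ((subUnion I r).card : ℤ) + (degOf I r : ℤ) - 1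
          = ((I r \ subUnion I r).card : ℤ) + (degOf I r : ℤ) - 1 := by
      intro r
      have := Finset.card_sdiff_of_subset (subUnion_subset I r)
      have h2 : (subUnion I r).card ≤ (I r).card :=
        Finset.card_le_card (subUnion_subset I r)
      omega
    rw [Finset.sum_congr rfl (fun r _ => hterm r)]
    push_cast
    rw [Finset.sum_sub_distrib, Finset.sum_add_distrib]
    simp [Finset.card_univ]
  have h2 : ∑ r, ((I r \ subUnion I r).card : ℤ) = ((Finset.univ.biUnion I).card : ℤ) := by
    rw [← sum_priv hinj hcard hnc]
    push_cast
    rfl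
  have h3 : ∑ r, (degOf I r : ℤ) =
      ((Finset.univ.filter fun s => ¬ IsRoot I s).card : ℤ) := by
    rw [← sum_deg hinj hcard hnc]
    push_cast
    rfl
  have h4 := card_Sset hn hinj hsub hcard hnc
  have h5 : (Finset.univ.filter fun r => IsRoot I r).card
      + (Finset.univ.filter fun r => ¬ IsRoot I r).card = m := by
    rw [Finset.card_filter_add_card_filter_not, Finset.card_univ, Fintype.card_fin]
  have h6 : (Finset.univ.biUnion I).card ≤ n := by
    have : Finset.univ.biUnion I ⊆ Finset.Icc 1 n := by
      intro x hx
      obtain ⟨r, -, hr⟩ := Finset.mem_biUnion.mp hx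
      exact hsub r hr
    have := Finset.card_le_card this
    rwa [Nat.card_Icc, Nat.add_sub_cancel] at this
  rw [h1, h2, h3, h4]
  push_cast
  omega

/-- For a non-crossing family of distinct subsets `I₁,…,I_m` of
`{1,…,n}`, each with at least 3 elements: the dual of a standard datum is a standard
datum, duality is an involution, and the degrees of a standard datum and of its dual sum
to `n`. -/
theorem stmt_11 (n m : ℕ) (hn : 1 ≤ n) (I : Fin m → Finset ℕ)
    (hinj : Function.Injective I)
    (hsub : ∀ r, I r ⊆ Finset.Icc 1 n)
    (hcard : ∀ r, 3 ≤ (I r).card)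
    (hnc : ∀ r s, I r ⊆ I s ∨ I s ⊆ I r ∨ Disjoint (I r) (I s))
    (A : Finset ℕ) (B : Finset (ℕ × ℕ)) (iv : Fin m → ℤ)
    (hstd : IsStandardDatum n I A B iv) :
    IsStandardDatum n I (dualA n I A B) B (fun r => cOf I r - iv r) ∧
    (dualA n I (dualA n I A B) B = A ∧
      (fun r => cOf I r - (cOf I r - iv r)) = iv) ∧
    degDatum A B iv + degDatum (dualA n I A B) B (fun r => cOf I r - iv r) = n := by
  obtain ⟨hA, hB, hBp, hiv⟩ := hstd
  set S := Sset n I with hS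
  set U := B.biUnion (fun p => ({p.1, p.2} : Finset ℕ)) with hU
  have hUmem : ∀ x ∈ U, x ∈ S ∧ x ∉ A := by
    intro x hx
    obtain ⟨p, hp, hxp⟩ := Finset.mem_biUnion.mp hx
    obtain ⟨-, h2, h3⟩ := hB p hp
    rcases Finset.mem_insert.mp hxp with h | h
    · subst h
      exact ⟨(Finset.mem_sdiff.mp h2).1, (Finset.mem_sdiff.mp h2).2⟩
    · rw [Finset.mem_singleton] at h; subst h
      exact ⟨(Finset.mem_sdiff.mp h3).1, (Finset.mem_sdiff.mp h3).2⟩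
  have hAU : Disjoint A U := Finset.disjoint_right.mpr (fun x hx => (hUmem x hx).2)
  have hAUS : A ∪ U ⊆ S := by
    intro x hx
    rcases Finset.mem_union.mp hx with h | h
    · exact hA h
    · exact (hUmem x h).1
  have hUcard : U.card = 2 * B.card := by
    rw [hU, Finset.card_biUnion]
    · rw [Finset.sum_congr rfl (fun p hp => Finset.card_pair (ne_of_lt (hB p hp).1)),
        Finset.sum_const, smul_eq_mul, Nat.mul_comm]
    · intro p hp q hq hpq
      obtain ⟨h1, h2, h3, h4⟩ := hBp p hp q hq hpq
      rw [Function.onFun, Finset.disjoint_left]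
      intro x hx hx'
      simp only [Finset.mem_insert, Finset.mem_singleton] at hx hx'
      rcases hx with h | h <;> rcases hx' with h' | h'
      · exact h1 (h.symm.trans h')
      · exact h2 (h.symm.trans h')
      · exact h3 (h.symm.trans h')
      · exact h4 (h.symm.trans h')
  have hdualdef : dualA n I A B = S \ (A ∪ U) := rfl
  have hdcard : ((dualA n I A B).card : ℤ) = (S.card : ℤ) - A.card - U.card := by
    rw [hdualdef, Finset.card_sdiff_of_subset hAUS,
      Nat.cast_sub (Finset.card_le_card hAUS), Finset.card_union_of_disjoint hAU]
    push_cast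
    ring
  refine ⟨⟨Finset.sdiff_subset, ?_, hBp, ?_⟩, ⟨?_, ?_⟩, ?_⟩
  · -- B-condition for the dual
    intro p hp
    obtain ⟨h1, h2, h3⟩ := hB p hp
    have hp1U : p.1 ∈ U := Finset.mem_biUnion.mpr ⟨p, hp, by simp⟩
    have hp2U : p.2 ∈ U := Finset.mem_biUnion.mpr ⟨p, hp, by simp⟩
    refine ⟨h1, ?_, ?_⟩
    · rw [Finset.mem_sdiff]
      refine ⟨(Finset.mem_sdiff.mp h2).1, ?_⟩
      rw [hdualdef, Finset.mem_sdiff]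
      push_neg
      intro _
      exact Finset.mem_union_right _ hp1U
    · rw [Finset.mem_sdiff]
      refine ⟨(Finset.mem_sdiff.mp h3).1, ?_⟩
      rw [hdualdef, Finset.mem_sdiff]
      push_neg
      intro _
      exact Finset.mem_union_right _ hp2U
  · -- exponent condition for the dual
    intro r
    obtain ⟨h1, h2⟩ := hiv r
    rw [le_min_iff] at h2
    obtain ⟨h2a, h2b⟩ := h2
    have hc := cOf_le hinj hcard hnc r
    show 1 ≤ cOf I r - iv r ∧ cOf I r - iv r ≤ min (((I r).card : ℤ) - 2) (cOf I r - 1)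
    refine ⟨by linarith, ?_⟩
    rw [le_min_iff]
    exact ⟨by linarith, by linarith⟩
  · -- involution on A
    ext x
    constructor
    · intro hx
      rw [dualA, Finset.mem_sdiff, Finset.mem_union] at hx
      obtain ⟨hxS, hx2⟩ := hx
      push_neg at hx2
      obtain ⟨hx2, hx3⟩ := hx2
      rw [hdualdef, Finset.mem_sdiff] at hx2
      push_neg at hx2
      rcases Finset.mem_union.mp (hx2 hxS) with h | h
      · exact h
      · exact absurd h hx3
    · intro hx
      rw [dualA, Finset.mem_sdiff, Finset.mem_union]
      refine ⟨hA hx, ?_⟩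
      push_neg
      refine ⟨?_, fun h => (hUmem x h).2 hx⟩
      rw [hdualdef, Finset.mem_sdiff]
      push_neg
      intro _
      exact Finset.mem_union_left _ hx
  · -- involution on exponents
    funext r
    ring
  · -- degrees sum to n
    have hkey := key_identity (I := I) hn hinj hsub hcard hnc
    have hU2 : (U.card : ℤ) = 2 * (B.card : ℤ) := by
      rw [hUcard]; push_cast; ring
    rw [degDatum, degDatum, Finset.sum_sub_distrib, hdcard, hU2]
    linarith
end
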